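/- arXiv:2204.14182 — 5 statements merged into one kernel-verified Lean document; each statement's English description precedes it below -/
import Mathlib

section
/- Let A be a finite-dimensional unital associative algebra over a field k, and let Δ(1) = Σᵢ aᵢ ⊗ bᵢ be an element of A ⊗ A satisfying the Casimir condition Σᵢ aᵢ ⊗ bᵢx = Σᵢ xaᵢ ⊗ bᵢ for all x ∈ A. Define Δ : A → A ⊗ A by Δ(x) = Σᵢ aᵢ ⊗ bᵢx. Then Δ is coassociative: (Δ ⊗ id)∘Δ = (id ⊗ Δ)∘Δ. -/
/-! The Casimir condition says `Δ y = ∑ i, y aᵢ ⊗ bᵢ`, and it survives any bilinear map applied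
to the two legs. Hence `(Δ ⊗ id) (Δ x) = ∑ i, Δ (x aᵢ) ⊗ bᵢ`, while in
`(id ⊗ Δ) (Δ x) = ∑ i, aᵢ ⊗ Δ (bᵢ x)` each `Δ (bᵢ x) = ∑ j, bᵢ x aⱼ ⊗ bⱼ`; both sides are
`∑ i, ∑ j, (aᵢ ⊗ bᵢ x aⱼ) ⊗ bⱼ`. -/

open TensorProduct

section Casimir

variable (R : Type*) {A M ι : Type*} [CommSemiring R] [Semiring A] [Algebra R A]
  [AddCommMonoid M] [Module R M] [Fintype ι]

def IsCasimir (a b : ι → A) : Prop :=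
  ∀ x : A, ∑ i, a i ⊗ₜ[R] (b i * x) = ∑ i, (x * a i) ⊗ₜ[R] b i

def casimirComul (a b : ι → A) : A →ₗ[R] A ⊗[R] A :=
  ∑ i, TensorProduct.mk R A A (a i) ∘ₗ LinearMap.mulLeft R (b i)

variable {R}

@[simp]
theorem casimirComul_apply (a b : ι → A) (x : A) :
    casimirComul R a b x = ∑ i, a i ⊗ₜ[R] (b i * x) := by
  simp [casimirComul, LinearMap.sum_apply]

theorem IsCasimir.sum_bilin {a b : ι → A} (h : IsCasimir R a b) (F : A →ₗ[R] A →ₗ[R] M)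
    (x : A) : ∑ i, F (a i) (b i * x) = ∑ i, F (x * a i) (b i) := by
  simpa [map_sum] using congrArg (TensorProduct.lift F) (h x)

end Casimir

theorem noncounital_comul_coassoc_general
    (k : Type*) [Field k] (A : Type*) [Ring A] [Algebra k A]
    (ι : Type*) [Fintype ι] (a b : ι → A)
    (casimir : ∀ x : A,
      (∑ i, a i ⊗ₜ[k] (b i * x)) = ∑ i, (x * a i) ⊗ₜ[k] b i) :
    ∀ x : A,
      (∑ i, ∑ j, (a j ⊗ₜ[k] (b j * a i)) ⊗ₜ[k] (b i * x))
        = ∑ i, ∑ j, (a i ⊗ₜ[k] a j) ⊗ₜ[k] (b j * (b i * x)) := by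
  intro x
  have h : IsCasimir k a b := casimir
  calc (∑ i, ∑ j, (a j ⊗ₜ[k] (b j * a i)) ⊗ₜ[k] (b i * x))
      = ∑ i, ∑ j, (a j ⊗ₜ[k] (b j * (x * a i))) ⊗ₜ[k] b i := by
        simpa [sum_tmul] using h.sum_bilin (TensorProduct.mk k _ A ∘ₗ casimirComul k a b) x
    _ = ∑ i, ∑ j, (a i ⊗ₜ[k] (b i * x * a j)) ⊗ₜ[k] b j := by
        rw [Finset.sum_comm]
        simp only [mul_assoc]
    _ = ∑ i, ∑ j, (a i ⊗ₜ[k] a j) ⊗ₜ[k] (b j * (b i * x)) := by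
        refine Finset.sum_congr rfl fun i _ => ?_
        simpa using
          (h.sum_bilin (TensorProduct.mk k _ A ∘ₗ TensorProduct.mk k A A (a i)) (b i * x)).symm

/-- Let `A` be a finite-dimensional unital associative algebra over a field `k`,
and let `Δ(1) = ∑ i, a i ⊗ b i` be an element of `A ⊗ A` satisfying the Casimir condition
`∑ i, a i ⊗ (b i * x) = ∑ i, (x * a i) ⊗ b i` for all `x`.  Define `Δ x = ∑ i, a i ⊗ (b i * x)`.
Then `Δ` is coassociative: `(Δ ⊗ id) ∘ Δ = (id ⊗ Δ) ∘ Δ` (stated elementwise in `(A ⊗ A) ⊗ A`). -/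
theorem noncounital_comul_coassoc
    (k : Type*) [Field k] (A : Type*) [Ring A] [Algebra k A] [FiniteDimensional k A]
    (ι : Type*) [Fintype ι] (a b : ι → A)
    (casimir : ∀ x : A,
      (∑ i, a i ⊗ₜ[k] (b i * x)) = ∑ i, (x * a i) ⊗ₜ[k] b i) :
    ∀ x : A,
      (∑ i, ∑ j, (a j ⊗ₜ[k] (b j * a i)) ⊗ₜ[k] (b i * x))
        = ∑ i, ∑ j, (a i ⊗ₜ[k] a j) ⊗ₜ[k] (b j * (b i * x)) :=
  noncounital_comul_coassoc_general k A ι a b casimir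
end

section
/- The maps X_{i,j}^{r,s} : P_{i+j}^{(s)} → Pᵢ^{(r)} given by precomposition with the path α_{i,j} (extended by zero on other summands), for 0 ≤ i ≤ n−1, 0 ≤ j ≤ ℓ−1, 0 ≤ r ≤ mᵢ−1, 0 ≤ s ≤ m_{i+j}−1, form a k-basis of the NSY algebra B_{n,ℓ}(m₀,…,m_{n−1}). -/
/-!
`M` is generated over `B_{n,ℓ}` by the idempotents `e_a^{(s)} = α_{a,0}^{(s)}`, and
`α_{a,c}^{(s)} = e_a^{(s)} · α_{a,c}` (`ractM a c` is right multiplication by `α_{a,c}`),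
so a `B_{n,ℓ}`-linear endomorphism `φ` is determined by the vectors `φ(e_a^{(s)})`.
Since `e_a^{(s)} = e_a^{(s)} · e_a`, the vector `φ(e_a^{(s)})` is supported on the paths
`α_{i,j}^{(r)}` ending at `a = i + j`. On the other hand `X_{i,j}^{r,s}` sends `e_{i+j}^{(s)}`
to `α_{i,j}^{(r)}` and every other idempotent to `0`. Hence the `α_{i,j}^{(r)}`-coordinate of
`φ(e_{i+j}^{(s)})` is the coefficient of `X_{i,j}^{r,s}` in `φ`: these coordinates separate the
`X`'s and reconstruct every `φ`.
-/

abbrev ModM (k : Type*) (n ℓ : ℕ) (m : ZMod n → ℕ) : Type _ :=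
  ((Σ i : ZMod n, Fin (m i)) × Fin ℓ) → k

noncomputable def ractM (k : Type*) [Field k] (n ℓ : ℕ) [NeZero n] (m : ZMod n → ℕ)
    (p : ZMod n) (b : Fin ℓ) (v : ModM k n ℓ m) : ModM k n ℓ m :=
  fun t => if h : (b : ℕ) ≤ (t.2 : ℕ) ∧
      p = t.1.1 + (((t.2 : ℕ) - (b : ℕ) : ℕ) : ZMod n)
    then v (t.1, ⟨(t.2 : ℕ) - (b : ℕ), by omega⟩) else 0

def IsHomM (k : Type*) [Field k] (n ℓ : ℕ) [NeZero n] (m : ZMod n → ℕ)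
    (φ : ModM k n ℓ m →ₗ[k] ModM k n ℓ m) : Prop :=
  ∀ (p : ZMod n) (b : Fin ℓ) (v : ModM k n ℓ m),
    φ (ractM k n ℓ m p b v) = ractM k n ℓ m p b (φ v)

noncomputable def nsySpace (k : Type*) [Field k] (n ℓ : ℕ) [NeZero n] (m : ZMod n → ℕ) :
    Submodule k (ModM k n ℓ m →ₗ[k] ModM k n ℓ m) where
  carrier := {φ | IsHomM k n ℓ m φ}
  add_mem' := by
    intro φ ψ hφ hψ p b v
    simp only [IsHomM, LinearMap.add_apply, hφ p b v, hψ p b v]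
    funext t; simp only [ractM, Pi.add_apply]; split <;> simp
  zero_mem' := by
    intro p b v
    simp only [LinearMap.zero_apply]
    funext t; simp only [ractM, Pi.zero_apply]; split <;> simp
  smul_mem' := by
    intro r φ hφ p b v
    simp only [IsHomM, LinearMap.smul_apply, hφ p b v]
    funext t; simp only [ractM, Pi.smul_apply]; split <;> simp

/-- The index set of the maps `X_{i,j}^{r,s}`:
`i ∈ ZMod n`, `j ∈ Fin ℓ`, `r ∈ Fin (mᵢ)`, `s ∈ Fin (m_{i+j})`. -/
abbrev Idx (n ℓ : ℕ) (m : ZMod n → ℕ) : Type _ :=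
  Σ (i : ZMod n) (j : Fin ℓ), Fin (m i) × Fin (m (i + ((j : ℕ) : ZMod n)))

/-- The endomorphism `X_{i,j}^{r,s}` of `M`: precomposition with `α_{i,j}`, i.e.
`α_{i+j,c}^{(s)} ↦ α_{i,j+c}^{(r)}` (zero if `j+c ≥ ℓ`), zero on all other summands. -/
noncomputable def XL (k : Type*) [Field k] (n ℓ : ℕ) [NeZero n] (m : ZMod n → ℕ)
    (p : Idx n ℓ m) : ModM k n ℓ m →ₗ[k] ModM k n ℓ m where
  toFun v := fun t =>
    if h : t.1.1 = p.1 ∧ ((t.1.2 : ℕ) = (p.2.2.1 : ℕ)) ∧ (p.2.1 : ℕ) ≤ (t.2 : ℕ)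
      then v (⟨p.1 + ((p.2.1 : ℕ) : ZMod n), p.2.2.2⟩, ⟨(t.2 : ℕ) - (p.2.1 : ℕ), by omega⟩)
      else 0
  map_add' := by intro x y; funext t; simp only [Pi.add_apply]; split <;> simp
  map_smul' := by intro r x; funext t; simp only [Pi.smul_apply, RingHom.id_apply]; split <;> simp

namespace Idx

variable {n ℓ : ℕ} {m : ZMod n → ℕ}

/-- The summand `P_{i+j}^{(s)}` on which `X_{i,j}^{r,s}` is supported. -/
def source (p : Idx n ℓ m) : Σ i : ZMod n, Fin (m i) :=
  ⟨p.1 + ((p.2.1 : ℕ) : ZMod n), p.2.2.2⟩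

/-- The basis vector `α_{i,j}^{(r)}`, image of `e_{i+j}^{(s)}` under `X_{i,j}^{r,s}`. -/
def target (p : Idx n ℓ m) : (Σ i : ZMod n, Fin (m i)) × Fin ℓ :=
  (⟨p.1, p.2.2.1⟩, p.2.1)

theorem source_target_injective :
    Function.Injective fun p : Idx n ℓ m => (p.source, p.target) := by
  rintro ⟨i, j, r, s⟩ ⟨i', j', r', s'⟩ h
  simp only [source, target, Prod.mk.injEq, Sigma.mk.inj_iff] at h
  obtain ⟨⟨-, hs⟩, ⟨rfl, hr⟩, rfl⟩ := h
  rw [heq_iff_eq] at hr hs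
  rw [hr, hs]

theorem exists_source_target {u : Σ i : ZMod n, Fin (m i)}
    {t : (Σ i : ZMod n, Fin (m i)) × Fin ℓ} (h : u.1 = t.1.1 + ((t.2 : ℕ) : ZMod n)) :
    ∃ p : Idx n ℓ m, p.source = u ∧ p.target = t := by
  obtain ⟨a, s⟩ := u
  obtain ⟨⟨i, r⟩, j⟩ := t
  dsimp only at h
  subst h
  exact ⟨⟨i, j, r, s⟩, rfl, rfl⟩

end Idx

section

variable {k : Type*} [Field k] {n ℓ : ℕ} [NeZero n] {m : ZMod n → ℕ}

theorem ractM_apply (p : ZMod n) (b : Fin ℓ) (v : ModM k n ℓ m) (t) :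
    ractM k n ℓ m p b v t = if h : (b : ℕ) ≤ (t.2 : ℕ) ∧
        p = t.1.1 + (((t.2 : ℕ) - (b : ℕ) : ℕ) : ZMod n)
      then v (t.1, ⟨(t.2 : ℕ) - (b : ℕ), by omega⟩) else 0 := rfl

theorem XL_apply (p : Idx n ℓ m) (v : ModM k n ℓ m) (t) :
    XL k n ℓ m p v t =
      if h : t.1.1 = p.1 ∧ ((t.1.2 : ℕ) = (p.2.2.1 : ℕ)) ∧ (p.2.1 : ℕ) ≤ (t.2 : ℕ)
      then v (⟨p.1 + ((p.2.1 : ℕ) : ZMod n), p.2.2.2⟩,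
        ⟨(t.2 : ℕ) - (p.2.1 : ℕ), by omega⟩)
      else 0 := rfl

theorem XL_isHomM (p : Idx n ℓ m) : IsHomM k n ℓ m (XL k n ℓ m p) := by
  obtain ⟨i, j, r, s⟩ := p
  intro q b v
  funext ⟨⟨a, x⟩, c⟩
  simp only [XL_apply, ractM_apply]
  have hcast : ∀ {d e : ℕ}, d + e ≤ c →
      (d : ZMod n) + ((c - d - e : ℕ) : ZMod n) = ((c - e : ℕ) : ZMod n) := fun h => by
    rw [← Nat.cast_add]; congr 1; omega
  split_ifs <;> grind

/-- The idempotent `e_a^{(s)} = α_{a,0}^{(s)}` generating the summand `P_a^{(s)}`. -/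
def idemVec (u : Σ i : ZMod n, Fin (m i)) (hℓ : 0 < ℓ) : ModM k n ℓ m :=
  Pi.single (u, ⟨0, hℓ⟩) 1

theorem single_eq_ractM_idemVec (a : ZMod n) (s : Fin (m a)) (c : Fin ℓ) :
    (Pi.single (⟨a, s⟩, c) 1 : ModM k n ℓ m) =
      ractM k n ℓ m a c (idemVec ⟨a, s⟩ c.pos) := by
  funext ⟨⟨i, r⟩, d⟩
  simp only [ractM_apply, idemVec, Pi.single_apply]
  obtain rfl | hi := eq_or_ne i a
  · simp only [Prod.mk.injEq, Sigma.mk.inj_iff, heq_iff_eq, true_and, Fin.ext_iff]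
    by_cases hdc : (d : ℕ) = c
    · simp [hdc]
    · rw [if_neg (by tauto)]
      split_ifs <;> first | rfl | omega
  · simp [hi]

theorem IsHomM.ext {φ ψ : ModM k n ℓ m →ₗ[k] ModM k n ℓ m}
    (hφ : IsHomM k n ℓ m φ) (hψ : IsHomM k n ℓ m ψ)
    (hgen : ∀ u hℓ, φ (idemVec u hℓ) = ψ (idemVec u hℓ)) : φ = ψ := by
  refine (Pi.basisFun k _).ext fun ⟨⟨a, s⟩, c⟩ => ?_
  rw [Pi.basisFun_apply, single_eq_ractM_idemVec, hφ, hψ, hgen]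

theorem IsHomM.apply_idemVec_eq_zero {φ : ModM k n ℓ m →ₗ[k] ModM k n ℓ m}
    (hφ : IsHomM k n ℓ m φ) {u : Σ i : ZMod n, Fin (m i)} (hℓ : 0 < ℓ)
    {t : (Σ i : ZMod n, Fin (m i)) × Fin ℓ} (ht : u.1 ≠ t.1.1 + ((t.2 : ℕ) : ZMod n)) :
    φ (idemVec u hℓ) t = 0 := by
  obtain ⟨a, s⟩ := u
  rw [idemVec, single_eq_ractM_idemVec a s, hφ, ractM_apply, dif_neg]
  simpa using ht

theorem XL_apply_idemVec (p : Idx n ℓ m) (u : Σ i : ZMod n, Fin (m i)) (hℓ : 0 < ℓ)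
    (t : (Σ i : ZMod n, Fin (m i)) × Fin ℓ) :
    XL k n ℓ m p (idemVec u hℓ) t = if (p.source, p.target) = (u, t) then 1 else 0 := by
  obtain ⟨⟨a, x⟩, c⟩ := t
  by_cases hu : p.source = u
  · subst hu
    obtain ⟨i, j, r, s⟩ := p
    obtain rfl | hi := eq_or_ne a i
    · simp only [XL_apply, idemVec, Idx.source, Idx.target, Pi.single_apply,
        Prod.mk.injEq, Sigma.mk.inj_iff, heq_iff_eq, true_and, Fin.ext_iff]
      rw [dite_eq_ite, ← ite_and]
      exact if_congr (by omega) rfl rfl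
    · simp [XL_apply, Idx.target, hi, hi.symm]
  · rw [if_neg fun heq => hu (congrArg Prod.fst heq), XL_apply, dite_eq_right_iff]
    intro _
    rw [idemVec, Pi.single_apply, if_neg fun heq => hu (congrArg Prod.fst heq)]

def coeffs : (ModM k n ℓ m →ₗ[k] ModM k n ℓ m) →ₗ[k] (Idx n ℓ m → k) :=
  LinearMap.pi fun p =>
    LinearMap.proj p.target ∘ₗ LinearMap.applyₗ (idemVec p.source p.2.1.pos)

theorem coeffs_XL (q : Idx n ℓ m) : coeffs (XL k n ℓ m q) = Pi.single q 1 := by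
  funext p
  simp only [coeffs, LinearMap.pi_apply, LinearMap.comp_apply, LinearMap.applyₗ_apply_apply,
    LinearMap.proj_apply, XL_apply_idemVec, Idx.source_target_injective.eq_iff, Pi.single_apply,
    eq_comm]

theorem linearIndependent_XL : LinearIndependent k (XL k n ℓ m) :=
  LinearIndependent.of_comp coeffs <| by
    simpa only [Function.comp_def, coeffs_XL] using Pi.linearIndependent_single_one (Idx n ℓ m) k

theorem IsHomM.eq_sum_coeffs_smul_XL {φ : ModM k n ℓ m →ₗ[k] ModM k n ℓ m}
    (hφ : IsHomM k n ℓ m φ) : φ = ∑ p, coeffs φ p • XL k n ℓ m p := by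
  have hsum : IsHomM k n ℓ m (∑ p, coeffs φ p • XL k n ℓ m p) :=
    Submodule.sum_mem (nsySpace k n ℓ m) fun p _ => Submodule.smul_mem _ _ (XL_isHomM p)
  refine hφ.ext hsum fun u hℓ => funext fun t => ?_
  simp only [LinearMap.sum_apply, Finset.sum_apply, LinearMap.smul_apply, Pi.smul_apply,
    XL_apply_idemVec, smul_eq_mul, mul_ite, mul_one, mul_zero]
  by_cases ht : u.1 = t.1.1 + ((t.2 : ℕ) : ZMod n)
  · obtain ⟨p₀, rfl, rfl⟩ := Idx.exists_source_target ht
    simp only [Idx.source_target_injective.eq_iff, Finset.sum_ite_eq', Finset.mem_univ, if_true]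
    rfl
  · rw [hφ.apply_idemVec_eq_zero hℓ ht]
    refine (Finset.sum_eq_zero fun p _ => if_neg fun hp => ht ?_).symm
    obtain ⟨rfl, rfl⟩ := Prod.mk.inj hp
    rfl

theorem span_XL_eq_nsySpace :
    Submodule.span k (Set.range (XL k n ℓ m)) = nsySpace k n ℓ m := by
  refine le_antisymm (Submodule.span_le.mpr <| Set.range_subset_iff.mpr XL_isHomM)
    fun φ hφ => ?_
  rw [IsHomM.eq_sum_coeffs_smul_XL hφ]
  exact Submodule.sum_mem _ fun p _ => Submodule.smul_mem _ _ (Submodule.subset_span ⟨p, rfl⟩)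

end

theorem nsy_basis_general
    (k : Type*) [Field k] (n ℓ : ℕ) [NeZero n]
    (m : ZMod n → ℕ) :
    LinearIndependent k (fun p : Idx n ℓ m => XL k n ℓ m p) ∧
    Submodule.span k (Set.range (fun p : Idx n ℓ m => XL k n ℓ m p))
      = nsySpace k n ℓ m :=
  ⟨linearIndependent_XL, span_XL_eq_nsySpace⟩

/-- The maps `X_{i,j}^{r,s}` form a `k`-basis of
`B_{n,ℓ}(m₀,…,m_{n-1}) = End_{B_{n,ℓ}}(M)`: they are linearly independent and span exactly the
subspace of `B_{n,ℓ}`-linear endomorphisms of `M`. -/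
theorem nsy_basis
    (k : Type*) [Field k] (n ℓ : ℕ) [NeZero n] (hℓ : 1 ≤ ℓ) (hℓn : ℓ ≤ n - 1)
    (m : ZMod n → ℕ) (hm : ∀ i, 0 < m i) :
    LinearIndependent k (fun p : Idx n ℓ m => XL k n ℓ m p) ∧
    Submodule.span k (Set.range (fun p : Idx n ℓ m => XL k n ℓ m p))
      = nsySpace k n ℓ m :=
  nsy_basis_general k n ℓ m
end

section
/- The NSY algebra B_{n,ℓ}(m₀,…,m_{n−1}) is Frobenius if and only if mᵢ = m_{i+ℓ−1 mod n} for all i = 0,…,n−1. -/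
noncomputable def e (k : Type*) [Field k] (n ℓ : ℕ) [NeZero n] (m : ZMod n → ℕ)
    (p : Idx n ℓ m) : Idx n ℓ m → k :=
  Pi.single p 1

lemma idx_vertex_eq (n ℓ : ℕ) [NeZero n] (m : ZMod n → ℕ) (p q : Idx n ℓ m)
    (h1 : q.1 = p.1 + ((p.2.1 : ℕ) : ZMod n)) :
    m (q.1 + ((q.2.1 : ℕ) : ZMod n))
      = m (p.1 + ((((p.2.1 : ℕ) + (q.2.1 : ℕ)) : ℕ) : ZMod n)) := by
  rcases q with ⟨qi, qj, qr, qs⟩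
  have h1' : qi = p.1 + ((p.2.1 : ℕ) : ZMod n) := h1
  subst h1'
  congr 1
  push_cast
  ring

noncomputable def sc (k : Type*) [Field k] (n ℓ : ℕ) [NeZero n] (m : ZMod n → ℕ)
    (p q t : Idx n ℓ m) : k :=
  if h : q.1 = p.1 + ((p.2.1 : ℕ) : ZMod n) ∧ (q.2.2.1 : ℕ) = (p.2.2.2 : ℕ) ∧
      (p.2.1 : ℕ) + (q.2.1 : ℕ) < ℓ
    then (if t = ⟨p.1, ⟨(p.2.1 : ℕ) + (q.2.1 : ℕ), h.2.2⟩,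
            (p.2.2.1, Fin.cast (idx_vertex_eq n ℓ m p q h.1) q.2.2.2)⟩
          then 1 else 0)
    else 0

noncomputable def mulA (k : Type*) [Field k] (n ℓ : ℕ) [NeZero n] (m : ZMod n → ℕ)
    (x y : Idx n ℓ m → k) : Idx n ℓ m → k :=
  fun t => ∑ p : Idx n ℓ m, ∑ q : Idx n ℓ m, x p * y q * sc k n ℓ m p q t

set_option linter.unusedSectionVars false
section Aux
variable {k : Type*} [Field k] {n ℓ : ℕ} [NeZero n] {m : ZMod n → ℕ}

open Finset

/-- value of the `j` component -/
def vJ (p : Idx n ℓ m) : ℕ := (p.2.1 : ℕ)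
/-- value of the `r` component -/
def vR (p : Idx n ℓ m) : ℕ := (p.2.2.1 : ℕ)
/-- value of the `s` component -/
def vS (p : Idx n ℓ m) : ℕ := (p.2.2.2 : ℕ)

lemma vJ_lt (p : Idx n ℓ m) : vJ p < ℓ := p.2.1.isLt
lemma vR_lt (p : Idx n ℓ m) : vR p < m p.1 := p.2.2.1.isLt
lemma vS_lt (p : Idx n ℓ m) : vS p < m (p.1 + ((vJ p : ℕ) : ZMod n)) := p.2.2.2.isLt

lemma idx_ext {p q : Idx n ℓ m} (h1 : p.1 = q.1) (h2 : vJ p = vJ q)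
    (h3 : vR p = vR q) (h4 : vS p = vS q) : p = q := by
  obtain ⟨pi, pj, pr, ps⟩ := p
  obtain ⟨qi, qj, qr, qs⟩ := q
  simp only [vJ, vR, vS] at h1 h2 h3 h4

  subst h1
  have hj : pj = qj := Fin.ext h2
  subst hj
  have hr : pr = qr := Fin.ext h3
  subst hr
  have hs : ps = qs := Fin.ext h4
  rw [hs]

/-- The purely value-based condition for `sc p q t` to equal `1`. -/
def bigcond (p q t : Idx n ℓ m) : Prop :=
  q.1 = p.1 + ((vJ p : ℕ) : ZMod n) ∧ vR q = vS p ∧ vJ p + vJ q < ℓ ∧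
    t.1 = p.1 ∧ vJ t = vJ p + vJ q ∧ vR t = vR p ∧ vS t = vS q

instance (p q t : Idx n ℓ m) : Decidable (bigcond p q t) := by
  unfold bigcond; infer_instance

lemma sc_eq (p q t : Idx n ℓ m) :
    sc k n ℓ m p q t = if bigcond p q t then 1 else 0 := by
  rw [sc]
  by_cases h1 : q.1 = p.1 + ((p.2.1 : ℕ) : ZMod n) ∧ (q.2.2.1 : ℕ) = (p.2.2.2 : ℕ) ∧
      (p.2.1 : ℕ) + (q.2.1 : ℕ) < ℓ
  · rw [dif_pos h1]
    by_cases h2 : t = ⟨p.1, ⟨(p.2.1 : ℕ) + (q.2.1 : ℕ), h1.2.2⟩,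
        (p.2.2.1, Fin.cast (idx_vertex_eq n ℓ m p q h1.1) q.2.2.2)⟩
    · rw [if_pos h2, if_pos]
      subst h2
      exact ⟨h1.1, h1.2.1, h1.2.2, rfl, rfl, rfl, rfl⟩
    · rw [if_neg h2, if_neg]
      intro hb
      exact h2 (idx_ext hb.2.2.2.1 hb.2.2.2.2.1 hb.2.2.2.2.2.1
        (by simpa [vS] using hb.2.2.2.2.2.2))
  · rw [dif_neg h1, if_neg]
    intro hb
    exact h1 ⟨hb.1, hb.2.1, hb.2.2.1⟩

lemma mulA_single_left (p : Idx n ℓ m) (y : Idx n ℓ m → k) (t : Idx n ℓ m) :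
    mulA k n ℓ m (e k n ℓ m p) y t = ∑ q : Idx n ℓ m, y q * sc k n ℓ m p q t := by
  rw [mulA]
  rw [Finset.sum_eq_single p]
  · simp [e, Pi.single_eq_same]
  · intro b _ hb
    simp [e, Pi.single_eq_of_ne hb]
  · simp

lemma mulA_single_right (x : Idx n ℓ m → k) (q : Idx n ℓ m) (t : Idx n ℓ m) :
    mulA k n ℓ m x (e k n ℓ m q) t = ∑ p : Idx n ℓ m, x p * sc k n ℓ m p q t := by
  rw [mulA]
  refine Finset.sum_congr rfl fun p _ => ?_
  rw [Finset.sum_eq_single q]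
  · simp [e, Pi.single_eq_same]
  · intro b _ hb
    simp [e, Pi.single_eq_of_ne hb]
  · simp

lemma mulA_single_single (p q : Idx n ℓ m) (t : Idx n ℓ m) :
    mulA k n ℓ m (e k n ℓ m p) (e k n ℓ m q) t = sc k n ℓ m p q t := by
  rw [mulA_single_left, Finset.sum_eq_single q]
  · simp [e, Pi.single_eq_same]
  · intro b _ hb
    simp [e, Pi.single_eq_of_ne hb]
  · simp

end Aux
section Dim
set_option linter.unusedSectionVars false
variable {k : Type*} [Field k] {n ℓ : ℕ} [NeZero n] {m : ZMod n → ℕ}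

open Finset

/-- Submodule of functions supported on `P`. -/
def suppSub (k : Type*) [Field k] {ι : Type*} [Fintype ι] (P : ι → Prop) :
    Submodule k (ι → k) where
  carrier := {x | ∀ p, ¬ P p → x p = 0}
  add_mem' := fun ha hb p hp => by simp [ha p hp, hb p hp]
  zero_mem' := fun p _ => rfl
  smul_mem' := fun c x hx p hp => by simp [hx p hp]

lemma mem_suppSub {ι : Type*} [Fintype ι] {P : ι → Prop} {x : ι → k} :
    x ∈ suppSub k P ↔ ∀ p, ¬ P p → x p = 0 := Iff.rfl

noncomputable def suppSubEquiv (k : Type*) [Field k] {ι : Type*} [Fintype ι]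
    (P : ι → Prop) [DecidablePred P] : suppSub k P ≃ₗ[k] ({p // P p} → k) where
  toFun x := fun q => x.1 q.1
  map_add' x y := rfl
  map_smul' c x := rfl
  invFun y := ⟨fun p => if h : P p then y ⟨p, h⟩ else 0, fun p hp => dif_neg hp⟩
  left_inv x := by
    ext p
    dsimp
    split_ifs with h
    · rfl
    · exact (x.2 p h).symm
  right_inv y := by
    funext q
    dsimp
    rw [dif_pos q.2]

lemma finrank_suppSub {ι : Type*} [Fintype ι] (P : ι → Prop) [DecidablePred P] :
    Module.finrank k (suppSub k P) = Fintype.card {p // P p} := by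
  rw [LinearEquiv.finrank_eq (suppSubEquiv k P), Module.finrank_fintype_fun_eq_card]

/-- counting basis elements with a fixed `j`-value -/
def jLayerEquiv (n ℓ : ℕ) [NeZero n] (m : ZMod n → ℕ) (c : ℕ) (hc : c < ℓ) :
    {p : Idx n ℓ m // vJ p = c} ≃ Σ i : ZMod n, Fin (m i) × Fin (m (i + (c : ZMod n))) where
  toFun x := ⟨x.1.1, x.1.2.2.1,
    Fin.cast (by have h := x.2; simp only [vJ] at h; rw [h]) x.1.2.2.2⟩
  invFun y := ⟨⟨y.1, ⟨c, hc⟩, y.2.1, Fin.cast rfl y.2.2⟩, rfl⟩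
  left_inv x := by
    apply Subtype.ext
    apply idx_ext <;> simp [vJ, vR, vS, x.2.symm]
  right_inv y := by
    obtain ⟨i, r, s⟩ := y
    refine Sigma.ext rfl (heq_of_eq ?_)
    refine Prod.ext rfl ?_
    apply Fin.ext
    simp

lemma card_jLayer (c : ℕ) (hc : c < ℓ) :
    Fintype.card {p : Idx n ℓ m // vJ p = c} = ∑ i : ZMod n, m i * m (i + (c : ZMod n)) := by
  rw [Fintype.card_congr (jLayerEquiv n ℓ m c hc)]
  simp [Fintype.card_sigma]

end Dim
section Tau
set_option linter.unusedSectionVars false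
variable {k : Type*} [Field k] {n ℓ : ℕ} [NeZero n] {m : ZMod n → ℕ}

open Finset

/-- The Nakayama permutation on basis indices, given the multiplicity symmetry. -/
def tau (hfr : ∀ i : ZMod n, m i = m (i + ((ℓ - 1 : ℕ) : ZMod n))) :
    Idx n ℓ m ≃ Idx n ℓ m where
  toFun p := ⟨p.1 + ((vJ p : ℕ) : ZMod n), ⟨ℓ - 1 - vJ p, by have := vJ_lt p; omega⟩,
    (Fin.cast rfl p.2.2.2,
     Fin.cast (by
        rw [hfr p.1]
        congr 1
        rw [Nat.cast_sub (by have := vJ_lt p; omega : vJ p ≤ ℓ - 1)]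
        ring) p.2.2.1)⟩
  invFun u := ⟨u.1 - ((ℓ - 1 - vJ u : ℕ) : ZMod n), ⟨ℓ - 1 - vJ u, by have := vJ_lt u; omega⟩,
    (Fin.cast (by
        rw [hfr (u.1 - ((ℓ - 1 - vJ u : ℕ) : ZMod n))]
        congr 1
        rw [Nat.cast_sub (by have := vJ_lt u; omega : vJ u ≤ ℓ - 1)]
        simp only [vJ]
        ring) u.2.2.2,
     Fin.cast (by congr 1; ring) u.2.2.1)⟩
  left_inv p := by
    have hp := vJ_lt p
    apply idx_ext
    · show p.1 + ((vJ p : ℕ) : ZMod n) - ((ℓ - 1 - (ℓ - 1 - vJ p) : ℕ) : ZMod n) = p.1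
      rw [show ℓ - 1 - (ℓ - 1 - vJ p) = vJ p from by omega]
      ring
    · show ℓ - 1 - (ℓ - 1 - vJ p) = vJ p
      omega
    · simp [vR, vS, Fin.coe_cast]
    · simp [vR, vS, Fin.coe_cast]; rfl
  right_inv u := by
    have hu := vJ_lt u
    apply idx_ext
    · show u.1 - ((ℓ - 1 - vJ u : ℕ) : ZMod n) + ((ℓ - 1 - vJ u : ℕ) : ZMod n) = u.1
      ring
    · show ℓ - 1 - (ℓ - 1 - vJ u) = vJ u
      omega
    · simp [vR, vS, Fin.coe_cast]; rfl
    · simp [vR, vS, Fin.coe_cast]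

variable (hfr : ∀ i : ZMod n, m i = m (i + ((ℓ - 1 : ℕ) : ZMod n)))

lemma tau_fst (p : Idx n ℓ m) : (tau hfr p).1 = p.1 + ((vJ p : ℕ) : ZMod n) := rfl
lemma vJ_tau (p : Idx n ℓ m) : vJ (tau hfr p) = ℓ - 1 - vJ p := rfl
lemma vR_tau (p : Idx n ℓ m) : vR (tau hfr p) = vS p := rfl
lemma vS_tau (p : Idx n ℓ m) : vS (tau hfr p) = vR p := rfl
lemma tausymm_fst (u : Idx n ℓ m) :
    ((tau hfr).symm u).1 = u.1 - ((ℓ - 1 - vJ u : ℕ) : ZMod n) := rfl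
lemma vJ_tausymm (u : Idx n ℓ m) : vJ ((tau hfr).symm u) = ℓ - 1 - vJ u := rfl
lemma vR_tausymm (u : Idx n ℓ m) : vR ((tau hfr).symm u) = vS u := rfl
lemma vS_tausymm (u : Idx n ℓ m) : vS ((tau hfr).symm u) = vR u := rfl

lemma bigcond_tau_iff (p q u : Idx n ℓ m) :
    bigcond p q ((tau hfr).symm u) ↔ bigcond q u (tau hfr p) := by
  have hp := vJ_lt p; have hq := vJ_lt q; have hu := vJ_lt u
  unfold bigcond
  rw [tau_fst, vJ_tau, vR_tau, vS_tau, tausymm_fst, vJ_tausymm, vR_tausymm, vS_tausymm]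
  constructor
  · rintro ⟨h1, h2, h3, h4, h5, h6, h7⟩
    refine ⟨?_, h7, by omega, h1.symm, by omega, h2.symm, h6.symm⟩
    have h4' : u.1 = p.1 + ((ℓ - 1 - vJ u : ℕ) : ZMod n) := by rw [← h4]; ring
    rw [h4', h5, h1]
    push_cast
    ring
  · rintro ⟨g1, g2, g3, g4, g5, g6, g7⟩
    refine ⟨g4.symm, g6.symm, by omega, ?_, by omega, g7.symm, g2⟩
    rw [show ℓ - 1 - vJ u = vJ p + vJ q from by omega, g1, ← g4]
    push_cast
    ring

end Tau
section Bform
set_option linter.unusedSectionVars false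
variable {k : Type*} [Field k] {n ℓ : ℕ} [NeZero n] {m : ZMod n → ℕ}
open Finset

noncomputable def Bform (hfr : ∀ i : ZMod n, m i = m (i + ((ℓ - 1 : ℕ) : ZMod n))) :
    (Idx n ℓ m → k) →ₗ[k] (Idx n ℓ m → k) →ₗ[k] k :=
  LinearMap.mk₂ k (fun x y => ∑ p : Idx n ℓ m, x p * y (tau hfr p))
    (fun x x' y => by simp [add_mul, Finset.sum_add_distrib])
    (fun c x y => by simp [Finset.mul_sum, mul_assoc])
    (fun x y y' => by simp [mul_add, Finset.sum_add_distrib])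
    (fun c x y => by simp [Finset.mul_sum, smul_eq_mul]; exact Finset.sum_congr rfl fun p _ => by ring)

variable (hfr : ∀ i : ZMod n, m i = m (i + ((ℓ - 1 : ℕ) : ZMod n)))

lemma Bform_apply (x y : Idx n ℓ m → k) :
    Bform (k := k) hfr x y = ∑ p : Idx n ℓ m, x p * y (tau hfr p) := rfl

lemma Bform_assoc (x y z : Idx n ℓ m → k) :
    Bform (k := k) hfr (mulA k n ℓ m x y) z = Bform (k := k) hfr x (mulA k n ℓ m y z) := by
  have key : ∀ p q : Idx n ℓ m, (∑ t : Idx n ℓ m, sc k n ℓ m p q t * z (tau hfr t))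
      = ∑ u : Idx n ℓ m, z u * sc k n ℓ m q u (tau hfr p) := by
    intro p q
    rw [← Equiv.sum_comp (tau hfr).symm
      (fun t => sc k n ℓ m p q t * z (tau hfr t))]
    refine Finset.sum_congr rfl fun u _ => ?_
    rw [Equiv.apply_symm_apply, sc_eq, sc_eq, if_congr (bigcond_tau_iff hfr p q u) rfl rfl]
    ring
  rw [Bform_apply, Bform_apply]
  simp only [mulA]
  simp only [Finset.sum_mul, Finset.mul_sum]
  rw [Finset.sum_comm]
  refine Finset.sum_congr rfl fun p _ => ?_
  rw [Finset.sum_comm]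
  refine Finset.sum_congr rfl fun q _ => ?_
  trans (x p * y q) * ∑ t : Idx n ℓ m, sc k n ℓ m p q t * z (tau hfr t)
  · rw [Finset.mul_sum]
    exact Finset.sum_congr rfl fun t _ => by ring
  · rw [key p q, Finset.mul_sum]
    exact Finset.sum_congr rfl fun u _ => by ring

lemma Bform_nondeg_left (x : Idx n ℓ m → k) (hx : x ≠ 0) :
    ∃ y, Bform (k := k) hfr x y ≠ 0 := by
  obtain ⟨p₀, hp₀⟩ := Function.ne_iff.mp hx
  refine ⟨e k n ℓ m (tau hfr p₀), ?_⟩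
  rw [Bform_apply]
  have : ∀ p : Idx n ℓ m, x p * e k n ℓ m (tau hfr p₀) (tau hfr p)
      = if p = p₀ then x p else 0 := by
    intro p
    by_cases h : p = p₀
    · subst h; simp [e, Pi.single_eq_same]
    · rw [if_neg h]
      have : tau hfr p ≠ tau hfr p₀ := fun hc => h ((tau hfr).injective hc)
      simp [e, Pi.single_eq_of_ne this]
  rw [Finset.sum_congr rfl fun p _ => this p, Finset.sum_ite_eq' Finset.univ p₀ x]
  simpa using hp₀

lemma Bform_nondeg_right (y : Idx n ℓ m → k) (hy : y ≠ 0) :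
    ∃ x, Bform (k := k) hfr x y ≠ 0 := by
  obtain ⟨q₀, hq₀⟩ := Function.ne_iff.mp hy
  refine ⟨e k n ℓ m ((tau hfr).symm q₀), ?_⟩
  rw [Bform_apply]
  have : ∀ p : Idx n ℓ m, e k n ℓ m ((tau hfr).symm q₀) p * y (tau hfr p)
      = if p = (tau hfr).symm q₀ then y (tau hfr p) else 0 := by
    intro p
    by_cases h : p = (tau hfr).symm q₀
    · subst h; simp [e, Pi.single_eq_same]
    · rw [if_neg h]; simp [e, Pi.single_eq_of_ne h]
  rw [Finset.sum_congr rfl fun p _ => this p]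
  rw [Finset.sum_ite_eq' Finset.univ ((tau hfr).symm q₀) (fun p => y (tau hfr p))]
  simpa using hq₀

end Bform
section Forward
set_option linter.unusedSectionVars false
variable {k : Type*} [Field k] {n ℓ : ℕ} [NeZero n] {m : ZMod n → ℕ}
open Finset

lemma rad_decomp (hm : ∀ i, 0 < m i) (p : Idx n ℓ m) (hp : vJ p ≠ 0) :
    ∃ a b : Idx n ℓ m, vJ b ≠ 0 ∧
      e k n ℓ m p = mulA k n ℓ m (e k n ℓ m a) (e k n ℓ m b) := by
  obtain ⟨pi, pj, pr, ps⟩ := p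
  have hpj : (pj : ℕ) ≠ 0 := hp
  have hpl := pj.isLt
  set a : Idx n ℓ m := ⟨pi, ⟨(pj : ℕ) - 1, by omega⟩, (pr, ⟨0, hm _⟩)⟩ with ha
  set b : Idx n ℓ m := ⟨pi + ((((pj : ℕ) - 1 : ℕ)) : ZMod n), ⟨1, by omega⟩,
      (⟨0, hm _⟩, Fin.cast (by
        congr 1
        rw [Nat.cast_sub (by omega : 1 ≤ (pj : ℕ))]
        push_cast
        ring) ps)⟩ with hb
  refine ⟨a, b, one_ne_zero, ?_⟩
  funext t
  have hiff : (t = (⟨pi, pj, pr, ps⟩ : Idx n ℓ m)) ↔ bigcond a b t := ?_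
  · rw [mulA_single_single, sc_eq, e, Pi.single_apply, if_congr hiff rfl rfl]
  constructor
  · rintro rfl
    exact ⟨rfl, rfl, by show ((pj:ℕ) - 1) + 1 < ℓ; omega, rfl,
      by show (pj : ℕ) = ((pj:ℕ) - 1) + 1; omega, rfl, by simp [vS, Fin.coe_cast]; rfl⟩
  · rintro ⟨h1, h2, h3, h4, h5, h6, h7⟩
    refine idx_ext ?_ ?_ ?_ ?_
    · rw [h4]
    · rw [h5]; show ((pj:ℕ) - 1) + 1 = (pj:ℕ); omega
    · rw [h6, ha]; simp [vR]
    · rw [h7, hb]; simp [vS, Fin.coe_cast]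

lemma socle_killed (y : Idx n ℓ m → k) (hy : ∀ q, ¬ vJ q = ℓ - 1 → y q = 0)
    (α : Idx n ℓ m) (hα : vJ α ≠ 0) : mulA k n ℓ m (e k n ℓ m α) y = 0 := by
  funext t
  rw [mulA_single_left]
  apply Finset.sum_eq_zero
  intro q _
  by_cases hq : vJ q = ℓ - 1
  · have hαl := vJ_lt α
    rw [sc_eq, if_neg, mul_zero]
    intro hb
    have := hb.2.2.1
    omega
  · rw [hy q hq, zero_mul]

lemma rad_prod (w : Idx n ℓ m → k) (α : Idx n ℓ m) (hα : vJ α ≠ 0) :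
    mulA k n ℓ m w (e k n ℓ m α) ∈ suppSub k (fun p : Idx n ℓ m => vJ p ≠ 0) := by
  intro t ht
  rw [not_not] at ht
  rw [mulA_single_right]
  apply Finset.sum_eq_zero
  intro p _
  rw [sc_eq, if_neg, mul_zero]
  intro hb
  have := hb.2.2.2.2.1
  omega

lemma socle_detect (hm : ∀ i, 0 < m i) (y : Idx n ℓ m → k)
    (hann : ∀ α : Idx n ℓ m, vJ α ≠ 0 → mulA k n ℓ m (e k n ℓ m α) y = 0)
    (q : Idx n ℓ m) (hq : ¬ vJ q = ℓ - 1) : y q = 0 := by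
  obtain ⟨qi, qj, qr, qs⟩ := q
  have hq' : (qj : ℕ) ≠ ℓ - 1 := hq
  have hqj := qj.isLt
  have hℓ2 : 1 < ℓ := by omega
  set α : Idx n ℓ m := ⟨qi - 1, ⟨1, hℓ2⟩,
    (⟨0, hm _⟩, Fin.cast (by congr 1; push_cast; ring) qr)⟩ with hα
  set t : Idx n ℓ m := ⟨qi - 1, ⟨(qj : ℕ) + 1, by omega⟩,
    (⟨0, hm _⟩, Fin.cast (by congr 1; push_cast; ring) qs)⟩ with ht
  have h0 := congrFun (hann α one_ne_zero) t
  rw [mulA_single_left, Pi.zero_apply] at h0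
  have hcol : ∀ q' : Idx n ℓ m, y q' * sc k n ℓ m α q' t
      = if q' = (⟨qi, qj, qr, qs⟩ : Idx n ℓ m) then y q' else 0 := by
    intro q'
    rw [sc_eq]
    by_cases h : q' = (⟨qi, qj, qr, qs⟩ : Idx n ℓ m)
    · rw [if_pos h, if_pos, mul_one]
      subst h
      refine ⟨by show qi = (qi - 1) + (((1:ℕ)) : ZMod n); push_cast; ring,
        by simp [vR, vS, Fin.coe_cast]; rfl, by show 1 + (qj:ℕ) < ℓ; omega, rfl,
        by show (qj:ℕ) + 1 = 1 + (qj:ℕ); omega, rfl, by simp [vS, Fin.coe_cast]; rfl⟩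
    · rw [if_neg h, if_neg, mul_zero]
      rintro ⟨h1, h2, h3, h4, h5, h6, h7⟩
      apply h
      apply idx_ext
      · rw [h1]; show (qi - 1) + (((1:ℕ)) : ZMod n) = qi; push_cast; ring
      · show vJ q' = (qj : ℕ)
        have h5' : (qj : ℕ) + 1 = 1 + vJ q' := h5
        omega
      · rw [h2]; simp [vR, vS, Fin.coe_cast]; rfl
      · have hvst : vS t = (qs : ℕ) := by simp [ht, vS, Fin.coe_cast]; rfl
        show vS q' = (qs : ℕ)
        rw [← h7, hvst]
  rw [Finset.sum_congr rfl (fun q' _ => hcol q'),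
    Finset.sum_ite_eq' Finset.univ _ y] at h0
  simpa using h0

end Forward

/-- The NSY algebra `B_{n,ℓ}(m₀,…,m_{n-1})` is Frobenius — i.e. it admits an
associative, (two-sided) nondegenerate bilinear form — if and only if
`mᵢ = m_{i+ℓ-1 (mod n)}` for all `i`. -/
theorem nsy_frobenius_iff
    (k : Type*) [Field k] (n ℓ : ℕ) [NeZero n] (hℓ : 1 ≤ ℓ) (hℓn : ℓ ≤ n - 1)
    (m : ZMod n → ℕ) (hm : ∀ i, 0 < m i) :
    (∃ B : (Idx n ℓ m → k) →ₗ[k] (Idx n ℓ m → k) →ₗ[k] k,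
      (∀ x y z : Idx n ℓ m → k, B (mulA k n ℓ m x y) z = B x (mulA k n ℓ m y z)) ∧
      (∀ x : Idx n ℓ m → k, x ≠ 0 → ∃ y, B x y ≠ 0) ∧
      (∀ y : Idx n ℓ m → k, y ≠ 0 → ∃ x, B x y ≠ 0))
    ↔ ∀ i : ZMod n, m i = m (i + (((ℓ - 1 : ℕ)) : ZMod n)) := by
  classical
  constructor
  · rintro ⟨B, hassoc, hnd1, hnd2⟩
    set d : ZMod n := ((ℓ - 1 : ℕ) : ZMod n) with hd
    set R : Submodule k (Idx n ℓ m → k) := suppSub k (fun p : Idx n ℓ m => vJ p ≠ 0) with hR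
    set S : Submodule k (Idx n ℓ m → k) := suppSub k (fun p : Idx n ℓ m => vJ p = ℓ - 1) with hS
    set ψ : (Idx n ℓ m → k) →ₗ[k] Module.Dual k (Idx n ℓ m → k) := B.flip with hψ
    have hinj : Function.Injective ψ := by
      rw [← LinearMap.ker_eq_bot]
      rw [Submodule.eq_bot_iff]
      intro y hy
      by_contra hy0
      obtain ⟨x, hx⟩ := hnd2 y hy0
      apply hx
      have h := LinearMap.congr_fun (LinearMap.mem_ker.mp hy) x
      simpa [hψ] using h
    have hsur : Function.Surjective ψ :=
      (LinearMap.injective_iff_surjective_of_finrank_eq_finrank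
        (Subspace.dual_finrank_eq (K := k) (V := Idx n ℓ m → k)).symm).mp hinj
    set eψ : (Idx n ℓ m → k) ≃ₗ[k] Module.Dual k (Idx n ℓ m → k) :=
      LinearEquiv.ofBijective ψ ⟨hinj, hsur⟩ with heψ
    -- S equals the "orthogonal" of R
    have hSW : S = Submodule.comap ψ R.dualAnnihilator := by
      apply le_antisymm
      · intro y hy
        rw [Submodule.mem_comap, Submodule.mem_dualAnnihilator]
        intro x hx
        show B x y = 0
        have hxe : x = ∑ p : Idx n ℓ m, x p • e k n ℓ m p := by
          funext t
          rw [Finset.sum_apply]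
          rw [Finset.sum_eq_single t]
          · simp [e, Pi.single_eq_same]
          · intro b _ hb
            simp [e, Pi.single_eq_of_ne (Ne.symm hb)]
          · simp
        rw [hxe, map_sum, LinearMap.sum_apply]
        apply Finset.sum_eq_zero
        intro p _
        rw [map_smul, LinearMap.smul_apply]
        by_cases hvp : vJ p = 0
        · rw [hx p (by simpa using hvp), zero_smul]
        · obtain ⟨a, b, hb, hdec⟩ := rad_decomp (k := k) hm p hvp
          rw [hdec, hassoc, socle_killed y hy b hb, map_zero, smul_zero]
      · intro y hy
        intro q hq
        refine socle_detect hm y ?_ q hq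
        intro α hα
        by_contra hz0
        obtain ⟨x, hx⟩ := hnd2 _ hz0
        apply hx
        rw [← hassoc]
        rw [Submodule.mem_comap, Submodule.mem_dualAnnihilator] at hy
        exact hy _ (rad_prod x α hα)
    -- dimension count
    have hfinW : Module.finrank k (Submodule.comap ψ R.dualAnnihilator)
        + Module.finrank k R = Module.finrank k (Idx n ℓ m → k) := by
      have h1 : Submodule.comap ψ R.dualAnnihilator
          = Submodule.map (eψ.symm : _ →ₗ[k] _) R.dualAnnihilator := by
        rw [← Submodule.comap_equiv_eq_map_symm]
        rfl
      rw [h1, LinearEquiv.finrank_map_eq]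
      rw [← LinearEquiv.finrank_eq (Subspace.quotEquivAnnihilator R)]
      exact Submodule.finrank_quotient_add_finrank R
    have hcard : Fintype.card {p : Idx n ℓ m // vJ p = ℓ - 1}
        = Fintype.card {p : Idx n ℓ m // vJ p = 0} := by
      have h2 : Module.finrank k S = Fintype.card {p : Idx n ℓ m // vJ p = ℓ - 1} :=
        finrank_suppSub _
      have h3 : Module.finrank k R = Fintype.card {p : Idx n ℓ m // ¬ vJ p = 0} :=
        finrank_suppSub _
      have h4 : Module.finrank k (Idx n ℓ m → k) = Fintype.card (Idx n ℓ m) :=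
        Module.finrank_fintype_fun_eq_card k
      have h5 : Fintype.card {p : Idx n ℓ m // ¬ vJ p = 0}
          = Fintype.card (Idx n ℓ m) - Fintype.card {p : Idx n ℓ m // vJ p = 0} :=
        Fintype.card_subtype_compl _
      have h6 : Fintype.card {p : Idx n ℓ m // vJ p = 0} ≤ Fintype.card (Idx n ℓ m) :=
        Fintype.card_subtype_le _
      rw [← hSW] at hfinW
      omega
    have hsum : ∑ i : ZMod n, m i * m (i + d) = ∑ i : ZMod n, m i * m i := by
      have hA := card_jLayer (n := n) (ℓ := ℓ) (m := m) (ℓ - 1) (by omega)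
      have hB := card_jLayer (n := n) (ℓ := ℓ) (m := m) 0 (by omega)
      rw [hA, hB] at hcard
      simpa [hd] using hcard
    intro i
    -- pass to ℤ
    have hsumZ : ∑ i : ZMod n, (m i : ℤ) * m (i + d) = ∑ i : ZMod n, (m i : ℤ) * m i := by
      exact_mod_cast congrArg (Nat.cast : ℕ → ℤ) hsum
    have hshift : ∑ i : ZMod n, (m (i + d) : ℤ) * m (i + d)
        = ∑ i : ZMod n, (m i : ℤ) * m i :=
      Fintype.sum_equiv (Equiv.addRight d) _ _ (fun i => rfl)
    have hzero : ∑ i : ZMod n, ((m i : ℤ) - m (i + d)) ^ 2 = 0 := by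
      have expand : ∀ i : ZMod n, ((m i : ℤ) - m (i + d)) ^ 2
          = ((m i : ℤ) * m i + (m (i + d) : ℤ) * m (i + d)) - 2 * ((m i : ℤ) * m (i + d)) :=
        fun i => by ring
      rw [Finset.sum_congr rfl (fun i _ => expand i), Finset.sum_sub_distrib,
        Finset.sum_add_distrib, ← Finset.mul_sum, hshift, hsumZ]
      ring
    have hterm := (Finset.sum_eq_zero_iff_of_nonneg
      (fun j _ => sq_nonneg ((m j : ℤ) - m (j + d)))).mp hzero i (Finset.mem_univ i)
    have hsub : (m i : ℤ) - m (i + d) = 0 := by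
      have := sq_eq_zero_iff.mp hterm
      exact this
    have : (m i : ℤ) = m (i + d) := by linarith
    exact_mod_cast this
  · intro hfr
    exact ⟨Bform hfr, Bform_assoc hfr, Bform_nondeg_left hfr, Bform_nondeg_right hfr⟩
end

section
/- Suppose mᵢ = m_{i−ℓ+1 mod n} for all i (so the NSY algebra A = B_{n,ℓ}(m₀,…,m_{n−1}) is Frobenius). Then the linear functional ε(X_{i,j}^{r,s}) = δ_{j,ℓ−1} δ_{r,s} is a counit for the comultiplication Δ(X_{i,j}^{r,s}) = Σ_{k=0}^{ℓ−1−j} Σ_{t=0}^{m_{i+j+k}−1} X_{i,j+k}^{r,t} ⊗ X_{i+j+k−ℓ+1, ℓ−1−k}^{t,s}, i.e. (ε ⊗ id)Δ = id = (id ⊗ ε)Δ. -/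
/-- The counit `ε(X_{i,j}^{r,s}) = δ_{j,ℓ-1} δ_{r,s}` on basis elements. -/
noncomputable def epsv (k : Type*) [Field k] (n ℓ : ℕ) [NeZero n] (m : ZMod n → ℕ)
    (q : Idx n ℓ m) : k :=
  if (q.2.1 : ℕ) = ℓ - 1 ∧ (q.2.2.1 : ℕ) = (q.2.2.2 : ℕ) then 1 else 0

section FrobComul

variable (k : Type*) [Field k] (n ℓ : ℕ) [NeZero n] (m : ZMod n → ℕ)

/-- The first tensor factor `X_{i,j+k}^{r,t}` of `Δ(X_{i,j}^{r,s})`. -/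
noncomputable def froFst (p : Idx n ℓ m) (kk : Fin ℓ)
    (h : (p.2.1 : ℕ) + (kk : ℕ) < ℓ)
    (t : Fin (m (p.1 + ((((p.2.1 : ℕ) + (kk : ℕ) : ℕ)) : ZMod n)))) : Idx n ℓ m :=
  ⟨p.1, ⟨(p.2.1 : ℕ) + (kk : ℕ), h⟩, (p.2.2.1, t)⟩

/-- The vertex `i + j + k - ℓ + 1 (mod n)`. -/
noncomputable def froVtx (p : Idx n ℓ m) (kk : Fin ℓ) : ZMod n :=
  p.1 + ((((p.2.1 : ℕ) + (kk : ℕ) : ℕ)) : ZMod n) - (((ℓ - 1 : ℕ)) : ZMod n)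

lemma froVtx_back (p : Idx n ℓ m) (kk : Fin ℓ) (h : (p.2.1 : ℕ) + (kk : ℕ) < ℓ) :
    m (p.1 + (((p.2.1 : ℕ)) : ZMod n))
      = m (froVtx n ℓ m p kk + (((ℓ - 1 - (kk : ℕ) : ℕ)) : ZMod n)) := by
  congr 1
  have hk : (kk : ℕ) ≤ ℓ - 1 := by omega
  unfold froVtx
  push_cast [Nat.cast_sub hk]
  ring

/-- The second tensor factor `X_{i+j+k-ℓ+1, ℓ-1-k}^{t,s}` of `Δ(X_{i,j}^{r,s})`
(under the Frobenius condition `hm`). -/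
noncomputable def froSnd (hm : ∀ i : ZMod n, m i = m (i - (((ℓ - 1 : ℕ)) : ZMod n)))
    (p : Idx n ℓ m) (kk : Fin ℓ) (h : (p.2.1 : ℕ) + (kk : ℕ) < ℓ)
    (t : Fin (m (p.1 + ((((p.2.1 : ℕ) + (kk : ℕ) : ℕ)) : ZMod n)))) : Idx n ℓ m :=
  ⟨froVtx n ℓ m p kk, ⟨ℓ - 1 - (kk : ℕ), by omega⟩,
    (Fin.cast (hm (p.1 + ((((p.2.1 : ℕ) + (kk : ℕ) : ℕ)) : ZMod n))) t,
     Fin.cast (froVtx_back n ℓ m p kk h) p.2.2.2)⟩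

end FrobComul


lemma idxExt {n ℓ : ℕ} [NeZero n] {m : ZMod n → ℕ} {p q : Idx n ℓ m}
    (h1 : p.1 = q.1) (h2 : (p.2.1 : ℕ) = (q.2.1 : ℕ))
    (h3 : (p.2.2.1 : ℕ) = (q.2.2.1 : ℕ)) (h4 : (p.2.2.2 : ℕ) = (q.2.2.2 : ℕ)) : p = q := by
  obtain ⟨i, j, r, s⟩ := p
  obtain ⟨i', j', r', s'⟩ := q
  simp only at h1 h2 h3 h4
  subst h1
  have hjj : j = j' := Fin.ext h2
  subst hjj
  have h5 : (r, s) = (r', s') := Prod.ext (Fin.ext h3) (Fin.ext h4)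
  rw [h5]

/-- Suppose `mᵢ = m_{i-ℓ+1 (mod n)}` for all `i` (so the NSY algebra is
Frobenius).  Then `ε(X_{i,j}^{r,s}) = δ_{j,ℓ-1} δ_{r,s}` is a counit for the comultiplication
`Δ(X_{i,j}^{r,s}) = ∑_{k=0}^{ℓ-1-j} ∑_{t=0}^{m_{i+j+k}-1} X_{i,j+k}^{r,t} ⊗
X_{i+j+k-ℓ+1, ℓ-1-k}^{t,s}`, i.e. `(ε ⊗ id)Δ = id = (id ⊗ ε)Δ` on the basis. -/
theorem nsy_counit
    (k : Type*) [Field k] (n ℓ : ℕ) [NeZero n] (hℓ : 1 ≤ ℓ) (hℓn : ℓ ≤ n - 1)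
    (m : ZMod n → ℕ) (hmpos : ∀ i, 0 < m i)
    (hm : ∀ i : ZMod n, m i = m (i - (((ℓ - 1 : ℕ)) : ZMod n))) :
    ∀ p : Idx n ℓ m,
      ((∑ kk : Fin ℓ,
        if h : (p.2.1 : ℕ) + (kk : ℕ) < ℓ then
          ∑ t : Fin (m (p.1 + ((((p.2.1 : ℕ) + (kk : ℕ) : ℕ)) : ZMod n))),
            epsv k n ℓ m (froFst n ℓ m p kk h t) • e k n ℓ m (froSnd n ℓ m hm p kk h t)
        else 0)
        = e k n ℓ m p) ∧
      ((∑ kk : Fin ℓ,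
        if h : (p.2.1 : ℕ) + (kk : ℕ) < ℓ then
          ∑ t : Fin (m (p.1 + ((((p.2.1 : ℕ) + (kk : ℕ) : ℕ)) : ZMod n))),
            epsv k n ℓ m (froSnd n ℓ m hm p kk h t) • e k n ℓ m (froFst n ℓ m p kk h t)
        else 0)
        = e k n ℓ m p) := by
  intro p
  obtain ⟨i, j, r, s⟩ := p
  have hj : (j : ℕ) < ℓ := j.isLt
  constructor
  · -- (ε ⊗ id)Δ = id : only kk = ℓ-1-j, t = r contributes
    set kk₀ : Fin ℓ := ⟨ℓ - 1 - (j : ℕ), by omega⟩ with hkk₀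
    have hk₀ : (j : ℕ) + (kk₀ : ℕ) = ℓ - 1 := by simp [hkk₀]; omega
    have h : (j : ℕ) + (kk₀ : ℕ) < ℓ := by omega
    have hmr : m (i + ((((j : ℕ) + (kk₀ : ℕ) : ℕ)) : ZMod n)) = m i := by
      rw [hm (i + ((((j : ℕ) + (kk₀ : ℕ) : ℕ)) : ZMod n)), hk₀, add_sub_cancel_right]
    rw [Finset.sum_eq_single_of_mem kk₀ (Finset.mem_univ _) ?_]
    · rw [dif_pos h]
      set t₀ : Fin (m (i + ((((j : ℕ) + (kk₀ : ℕ) : ℕ)) : ZMod n))) :=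
        ⟨(r : ℕ), by rw [hmr]; exact r.isLt⟩ with ht₀
      rw [Finset.sum_eq_single_of_mem t₀ (Finset.mem_univ _) ?_]
      · have heps : epsv k n ℓ m (froFst n ℓ m ⟨i, j, r, s⟩ kk₀ h t₀) = 1 := by
          unfold epsv froFst
          exact if_pos ⟨hk₀, rfl⟩
        rw [heps, one_smul]
        refine congrArg (e k n ℓ m) (idxExt ?_ ?_ ?_ ?_)
        · show froVtx n ℓ m ⟨i, j, r, s⟩ kk₀ = i
          unfold froVtx
          simp only [hk₀]
          exact add_sub_cancel_right i _
        · show ℓ - 1 - (kk₀ : ℕ) = (j : ℕ)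
          simp [hkk₀]; omega
        · rfl
        · rfl
      · intro t _ ht
        have : epsv k n ℓ m (froFst n ℓ m ⟨i, j, r, s⟩ kk₀ h t) = 0 := by
          rw [epsv, if_neg]
          rintro ⟨-, h2⟩
          exact ht (Fin.ext (by simpa [froFst, ht₀] using h2.symm))
        rw [this, zero_smul]
    · intro kk _ hkk
      split_ifs with hlt
      · apply Finset.sum_eq_zero
        intro t _
        have : epsv k n ℓ m (froFst n ℓ m ⟨i, j, r, s⟩ kk hlt t) = 0 := by
          rw [epsv, if_neg]
          rintro ⟨h1, -⟩
          apply hkk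
          apply Fin.ext
          simp only [froFst] at h1
          simp [hkk₀]
          omega
        rw [this, zero_smul]
      · rfl
  · -- (id ⊗ ε)Δ = id : only kk = 0, t = s contributes
    set kk₀ : Fin ℓ := ⟨0, by omega⟩ with hkk₀
    have h : (j : ℕ) + (kk₀ : ℕ) < ℓ := by simpa [hkk₀] using hj
    rw [Finset.sum_eq_single_of_mem kk₀ (Finset.mem_univ _) ?_]
    · rw [dif_pos h]
      have hms : m (i + ((((j : ℕ) + (kk₀ : ℕ) : ℕ)) : ZMod n)) = m (i + (((j : ℕ)) : ZMod n)) := by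
        simp [hkk₀]
      set t₀ : Fin (m (i + ((((j : ℕ) + (kk₀ : ℕ) : ℕ)) : ZMod n))) :=
        ⟨(s : ℕ), by rw [hms]; exact s.isLt⟩ with ht₀
      rw [Finset.sum_eq_single_of_mem t₀ (Finset.mem_univ _) ?_]
      · have heps : epsv k n ℓ m (froSnd n ℓ m hm ⟨i, j, r, s⟩ kk₀ h t₀) = 1 := by
          unfold epsv froSnd
          exact if_pos ⟨rfl, rfl⟩
        rw [heps, one_smul]
        refine congrArg (e k n ℓ m) (idxExt rfl ?_ rfl ?_)
        · show (j : ℕ) + (kk₀ : ℕ) = (j : ℕ)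
          simp [hkk₀]
        · show (t₀ : ℕ) = (s : ℕ)
          simp [ht₀]
      · intro t _ ht
        have : epsv k n ℓ m (froSnd n ℓ m hm ⟨i, j, r, s⟩ kk₀ h t) = 0 := by
          rw [epsv, if_neg]
          rintro ⟨-, h2⟩
          apply ht
          apply Fin.ext
          exact h2
        rw [this, zero_smul]
    · intro kk _ hkk
      split_ifs with hlt
      · apply Finset.sum_eq_zero
        intro t _
        have hkk' : (kk : ℕ) ≠ 0 := by
          intro h0
          exact hkk (Fin.ext (by simp [hkk₀, h0]))
        have : epsv k n ℓ m (froSnd n ℓ m hm ⟨i, j, r, s⟩ kk hlt t) = 0 := by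
          rw [epsv, if_neg]
          rintro ⟨h1, -⟩
          simp only [froSnd] at h1
          have := kk.isLt
          omega
        rw [this, zero_smul]
      · rfl
end

section
/- Let H be a finite-dimensional weak Hopf algebra and Λ ∈ H a left integral (hΛ = ε_t(h)Λ for all h). Then Λ₁ ⊗ S(Λ₂)h = hΛ₁ ⊗ S(Λ₂) in H ⊗ H for all h ∈ H; i.e., Δ(Λ) composed with S in the second leg yields a Casimir element. -/
open TensorProduct LinearMap
set_option maxHeartbeats 1000000
set_option synthInstance.maxHeartbeats 200000

/-- A weak bialgebra over a field `k`: a `k`-algebra and `k`-coalgebra `(H,m,u,Δ,ε)` such that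
`Δ` is multiplicative, `ε` is weakly multiplicative (`ε(abc) = ε(ab₁)ε(b₂c) = ε(ab₂)ε(b₁c)`),
and `Δ²(1) = (Δ(1)⊗1)(1⊗Δ(1)) = (1⊗Δ(1))(Δ(1)⊗1)`. -/
structure WeakBialgebraData (k H : Type*) [Field k] [Ring H] [Algebra k H] where
  comul : H →ₗ[k] H ⊗[k] H
  counit : H →ₗ[k] k
  coassoc : ∀ h : H,
    (TensorProduct.assoc k H H H) ((LinearMap.rTensor H comul) (comul h))
      = (LinearMap.lTensor H comul) (comul h)
  counit_left : ∀ h : H,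
    (TensorProduct.lid k H) ((LinearMap.rTensor H counit) (comul h)) = h
  counit_right : ∀ h : H,
    (TensorProduct.rid k H) ((LinearMap.lTensor H counit) (comul h)) = h
  comul_mul : ∀ a b : H, comul (a * b) = comul a * comul b
  counit_weak : ∀ a b c : H,
    (LinearMap.mul' k k) ((TensorProduct.map counit counit)
      ((a ⊗ₜ[k] (1 : H)) * comul b * ((1 : H) ⊗ₜ[k] c))) = counit (a * b * c)
  counit_weak' : ∀ a b c : H,
    (LinearMap.mul' k k) ((TensorProduct.map counit counit)
      ((a ⊗ₜ[k] (1 : H)) * (TensorProduct.comm k H H (comul b)) * ((1 : H) ⊗ₜ[k] c)))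
      = counit (a * b * c)
  comul_one_left :
    (LinearMap.rTensor H comul) (comul 1)
      = (comul 1 ⊗ₜ[k] (1 : H)) * ((TensorProduct.assoc k H H H).symm ((1 : H) ⊗ₜ[k] comul 1))
  comul_one_right :
    (LinearMap.rTensor H comul) (comul 1)
      = ((TensorProduct.assoc k H H H).symm ((1 : H) ⊗ₜ[k] comul 1)) * (comul 1 ⊗ₜ[k] (1 : H))

/-- The source counital map `ε_s(x) = 1₁ ε(x 1₂)`. -/
noncomputable def epsS {k H : Type*} [Field k] [Ring H] [Algebra k H]
    (W : WeakBialgebraData k H) : H → H := fun x =>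
  (TensorProduct.rid k H)
    ((LinearMap.lTensor H (W.counit ∘ₗ LinearMap.mulLeft k x)) (W.comul 1))

/-- The target counital map `ε_t(x) = ε(1₁ x) 1₂`. -/
noncomputable def epsT {k H : Type*} [Field k] [Ring H] [Algebra k H]
    (W : WeakBialgebraData k H) : H → H := fun x =>
  (TensorProduct.lid k H)
    ((LinearMap.rTensor H (W.counit ∘ₗ LinearMap.mulRight k x)) (W.comul 1))


/-- A weak Hopf algebra: a weak bialgebra with an antipode `S` satisfying
`S(h₁)h₂ = ε_s(h)`, `h₁S(h₂) = ε_t(h)` and `S(h₁)h₂S(h₃) = S(h)`. -/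
structure WeakHopfData (k H : Type*) [Field k] [Ring H] [Algebra k H]
    extends WeakBialgebraData k H where
  antipode : H →ₗ[k] H
  antipode_left : ∀ h : H,
    (LinearMap.mul' k H) ((TensorProduct.map antipode LinearMap.id) (comul h))
      = epsS toWeakBialgebraData h
  antipode_right : ∀ h : H,
    (LinearMap.mul' k H) ((TensorProduct.map LinearMap.id antipode) (comul h))
      = epsT toWeakBialgebraData h
  antipode_mid : ∀ h : H,
    (LinearMap.mul' k H)
      ((TensorProduct.map ((LinearMap.mul' k H) ∘ₗ TensorProduct.map antipode LinearMap.id)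
          antipode)
        ((LinearMap.rTensor H comul) (comul h)))
      = antipode h


section Infra
variable {k H : Type*} [Field k] [Ring H] [Algebra k H]

variable {k H : Type*} [Field k] [Ring H] [Algebra k H]

lemma tmul_one_mul (x : H) (t : H ⊗[k] H) :
    (x ⊗ₜ[k] (1:H)) * t = rTensor H (mulLeft k x) t := by
  induction t using TensorProduct.induction_on with
  | zero => simp
  | tmul a b => simp [Algebra.TensorProduct.tmul_mul_tmul]
  | add a b ha hb => simp [mul_add, ha, hb]

lemma one_tmul_mul (x : H) (t : H ⊗[k] H) :
    ((1:H) ⊗ₜ[k] x) * t = lTensor H (mulLeft k x) t := by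
  induction t using TensorProduct.induction_on with
  | zero => simp
  | tmul a b => simp [Algebra.TensorProduct.tmul_mul_tmul]
  | add a b ha hb => simp [mul_add, ha, hb]

lemma mul_tmul_one (x : H) (t : H ⊗[k] H) :
    t * (x ⊗ₜ[k] (1:H)) = rTensor H (mulRight k x) t := by
  induction t using TensorProduct.induction_on with
  | zero => simp
  | tmul a b => simp [Algebra.TensorProduct.tmul_mul_tmul]
  | add a b ha hb => simp [add_mul, ha, hb]

lemma mul_one_tmul (x : H) (t : H ⊗[k] H) :
    t * ((1:H) ⊗ₜ[k] x) = lTensor H (mulRight k x) t := by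
  induction t using TensorProduct.induction_on with
  | zero => simp
  | tmul a b => simp [Algebra.TensorProduct.tmul_mul_tmul]
  | add a b ha hb => simp [add_mul, ha, hb]

lemma mu_mul_left (x : H) (t : H ⊗[k] H) :
    mul' k H ((x ⊗ₜ[k] (1:H)) * t) = x * mul' k H t := by
  induction t using TensorProduct.induction_on with
  | zero => simp
  | tmul a b => simp [Algebra.TensorProduct.tmul_mul_tmul, mul_assoc]
  | add a b ha hb => simp [mul_add, ha, hb]

lemma mu_mul_right (x : H) (t : H ⊗[k] H) :
    mul' k H (t * ((1:H) ⊗ₜ[k] x)) = mul' k H t * x := by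
  induction t using TensorProduct.induction_on with
  | zero => simp
  | tmul a b => simp [Algebra.TensorProduct.tmul_mul_tmul, mul_assoc]
  | add a b ha hb => simp [add_mul, ha, hb]

lemma assoc_mul (X Y : (H ⊗[k] H) ⊗[k] H) :
    TensorProduct.assoc k H H H (X * Y)
      = TensorProduct.assoc k H H H X * TensorProduct.assoc k H H H Y :=
  map_mul (Algebra.TensorProduct.assoc k k k H H H) X Y

lemma assoc_symm_mul (X Y : H ⊗[k] (H ⊗[k] H)) :
    (TensorProduct.assoc k H H H).symm (X * Y)
      = (TensorProduct.assoc k H H H).symm X * (TensorProduct.assoc k H H H).symm Y :=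
  map_mul (Algebra.TensorProduct.assoc k k k H H H).symm X Y

lemma tmul_mul (x y : H) (t : H ⊗[k] H) :
    (x ⊗ₜ[k] y) * t = map (mulLeft k x) (mulLeft k y) t := by
  induction t using TensorProduct.induction_on with
  | zero => simp
  | tmul a b => simp [Algebra.TensorProduct.tmul_mul_tmul]
  | add a b ha hb => simp [mul_add, ha, hb]

lemma mul_tmul (x y : H) (t : H ⊗[k] H) :
    t * (x ⊗ₜ[k] y) = map (mulRight k x) (mulRight k y) t := by
  induction t using TensorProduct.induction_on with
  | zero => simp
  | tmul a b => simp [Algebra.TensorProduct.tmul_mul_tmul]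
  | add a b ha hb => simp [add_mul, ha, hb]

end Infra

section WH
variable {k H : Type*} [Field k] [Ring H] [Algebra k H] (W : WeakHopfData k H)

/-- `ε_t` as a linear map: `h ↦ h₁ S(h₂)`. -/
noncomputable def eT : H →ₗ[k] H :=
  mul' k H ∘ₗ map LinearMap.id W.antipode ∘ₗ W.comul

/-- `ε_s` as a linear map: `h ↦ S(h₁) h₂`. -/
noncomputable def eS : H →ₗ[k] H :=
  mul' k H ∘ₗ map W.antipode LinearMap.id ∘ₗ W.comul

lemma eT_apply (h : H) : eT W h = epsT W.toWeakBialgebraData h := W.antipode_right h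

lemma eS_apply (h : H) : eS W h = epsS W.toWeakBialgebraData h := W.antipode_left h

lemma comul_one_mul (h : H) : W.comul 1 * W.comul h = W.comul h := by
  rw [← W.comul_mul, one_mul]

lemma comul_mul_one (h : H) : W.comul h * W.comul 1 = W.comul h := by
  rw [← W.comul_mul, mul_one]

lemma epsT_def (x : H) :
    epsT W.toWeakBialgebraData x
      = TensorProduct.lid k H
          ((rTensor H (W.counit ∘ₗ mulRight k x)) (W.comul 1)) := rfl

lemma epsS_def (x : H) :
    epsS W.toWeakBialgebraData x
      = TensorProduct.rid k H
          ((lTensor H (W.counit ∘ₗ mulLeft k x)) (W.comul 1)) := rfl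

/-- A-2 : `S(x) = ε_s(x₁) S(x₂)` (map form). -/
lemma antipode_eS (x : H) :
    mul' k H (map (eS W) W.antipode (W.comul x)) = W.antipode x := by
  have h1 : (map (eS W) W.antipode : H ⊗[k] H →ₗ[k] H ⊗[k] H)
      = map (mul' k H ∘ₗ map W.antipode LinearMap.id) W.antipode ∘ₗ rTensor H W.comul := by
    apply TensorProduct.ext'
    intro u v
    simp [eS]
  rw [h1]
  exact W.antipode_mid x

/-- pointwise associativity juggling for A-1. -/
lemma pw_assoc_S (T : (H ⊗[k] H) ⊗[k] H) :
    mul' k H (map W.antipode (mul' k H ∘ₗ map LinearMap.id W.antipode)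
        (TensorProduct.assoc k H H H T))
      = mul' k H (map (mul' k H ∘ₗ map W.antipode LinearMap.id) W.antipode T) := by
  induction T using TensorProduct.induction_on with
  | zero => simp
  | tmul s c =>
    induction s using TensorProduct.induction_on with
    | zero => simp
    | tmul a b => simp [mul_assoc]
    | add u v hu hv => simp only [add_tmul, map_add, LinearEquiv.map_add, hu, hv]
  | add u v hu hv => simp only [map_add, LinearEquiv.map_add, hu, hv]

/-- A-1 : `S(x) = S(x₁) ε_t(x₂)` (map form). -/
lemma antipode_eT (x : H) :
    mul' k H (map W.antipode (eT W) (W.comul x)) = W.antipode x := by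
  have h1 : (map W.antipode (eT W) : H ⊗[k] H →ₗ[k] H ⊗[k] H)
      = map W.antipode (mul' k H ∘ₗ map LinearMap.id W.antipode) ∘ₗ lTensor H W.comul := by
    apply TensorProduct.ext'
    intro u v
    simp [eT]
  rw [h1, comp_apply, ← W.coassoc, pw_assoc_S]
  exact W.antipode_mid x

/-- `Σ ε_t(h₁) h₂ = h`. -/
lemma sum_eT_mul (h : H) : mul' k H (rTensor H (eT W) (W.comul h)) = h := by
  have aux : ∀ t : H ⊗[k] H,
      mul' k H (rTensor H (eT W) t)
        = TensorProduct.lid k H (rTensor H W.counit (W.comul 1 * t)) := by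
    intro t
    induction t using TensorProduct.induction_on with
    | zero => simp
    | tmul u v =>
      have inner : ∀ s : H ⊗[k] H,
          (TensorProduct.lid k H) (rTensor H W.counit
            (map (mulRight k u) (mulRight k v) s))
          = (TensorProduct.lid k H) (rTensor H (W.counit ∘ₗ mulRight k u) s) * v := by
        intro s
        induction s using TensorProduct.induction_on with
        | zero => simp
        | tmul p q => simp [smul_mul_assoc]
        | add a b ha hb => simp only [map_add, LinearEquiv.map_add, add_mul, ha, hb]
      rw [mul_tmul, inner]
      simp [eT_apply, epsT_def]
    | add a b ha hb => simp only [map_add, mul_add, LinearEquiv.map_add, ha, hb]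
  rw [aux (W.comul h), comul_one_mul, W.counit_left]

/-- `Σ h₁ ε_s(h₂) = h`. -/
lemma sum_mul_eS (h : H) : mul' k H (lTensor H (eS W) (W.comul h)) = h := by
  have aux : ∀ t : H ⊗[k] H,
      mul' k H (lTensor H (eS W) t)
        = TensorProduct.rid k H (lTensor H W.counit (t * W.comul 1)) := by
    intro t
    induction t using TensorProduct.induction_on with
    | zero => simp
    | tmul u v =>
      have inner : ∀ s : H ⊗[k] H,
          (TensorProduct.rid k H) (lTensor H W.counit
            (map (mulLeft k u) (mulLeft k v) s))
          = u * (TensorProduct.rid k H) (lTensor H (W.counit ∘ₗ mulLeft k v) s) := by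
        intro s
        induction s using TensorProduct.induction_on with
        | zero => simp
        | tmul p q => simp [mul_smul_comm]
        | add a b ha hb => simp only [map_add, LinearEquiv.map_add, mul_add, ha, hb]
      rw [tmul_mul, inner]
      simp [eS_apply, epsS_def]
    | add a b ha hb => simp only [map_add, add_mul, LinearEquiv.map_add, ha, hb]
  rw [aux (W.comul h), comul_mul_one, W.counit_right]

/-- contraction of the middle leg. -/
noncomputable def Fin13 (W : WeakHopfData k H) : (H ⊗[k] H) ⊗[k] H →ₗ[k] H ⊗[k] H :=
  rTensor H ((TensorProduct.rid k H).toLinearMap ∘ₗ lTensor H W.counit)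

lemma Fin13_tmul (u v w : H) :
    Fin13 W ((u ⊗ₜ[k] v) ⊗ₜ[k] w) = W.counit v • u ⊗ₜ[k] w := by
  simp [Fin13, smul_tmul']

lemma Fin13_rTensor_comul (t : H ⊗[k] H) : Fin13 W (rTensor H W.comul t) = t := by
  induction t using TensorProduct.induction_on with
  | zero => simp
  | tmul u v =>
    have := W.counit_right u
    simp only [rTensor_tmul, Fin13, LinearEquiv.coe_coe, comp_apply]
    exact congrArg (fun z => z ⊗ₜ[k] v) this
  | add a b ha hb => simp only [map_add, ha, hb]

/-- identity (b): `1₁ h ⊗ 1₂ = h₁ ⊗ ε_t(h₂)`. -/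
lemma lemB (h : H) :
    W.comul 1 * (h ⊗ₜ[k] (1:H)) = lTensor H (eT W) (W.comul h) := by
  have way1 : ∀ t : H ⊗[k] H,
      Fin13 W ((TensorProduct.assoc k H H H).symm ((1:H) ⊗ₜ[k] W.comul 1)
          * (t ⊗ₜ[k] (1:H)))
        = lTensor H (eT W) t := by
    intro t
    induction t using TensorProduct.induction_on with
    | zero => simp
    | tmul u v =>
      have inner : ∀ s : H ⊗[k] H,
          Fin13 W ((TensorProduct.assoc k H H H).symm ((1:H) ⊗ₜ[k] s)
              * ((u ⊗ₜ[k] v) ⊗ₜ[k] (1:H)))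
            = u ⊗ₜ[k] (TensorProduct.lid k H
                (rTensor H (W.counit ∘ₗ mulRight k v) s)) := by
        intro s
        induction s using TensorProduct.induction_on with
        | zero => simp
        | tmul p q =>
          simp [Algebra.TensorProduct.tmul_mul_tmul, Fin13_tmul, tmul_smul, smul_tmul]
        | add a b ha hb =>
          simp only [tmul_add, LinearEquiv.map_add, add_mul, map_add, mul_add,
            add_tmul, ha, hb]
      rw [inner]
      simp [eT_apply, epsT_def]
    | add a b ha hb =>
      simp only [tmul_add, add_tmul, add_mul, mul_add, map_add, ha, hb]
  have way2 : Fin13 W ((TensorProduct.assoc k H H H).symm ((1:H) ⊗ₜ[k] W.comul 1)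
      * (W.comul h ⊗ₜ[k] (1:H))) = W.comul 1 * (h ⊗ₜ[k] (1:H)) := by
    have w2b : ∀ s : H ⊗[k] H,
        rTensor H W.comul s * (W.comul h ⊗ₜ[k] (1:H))
          = rTensor H W.comul (s * (h ⊗ₜ[k] (1:H))) := by
      intro s
      induction s using TensorProduct.induction_on with
      | zero => simp
      | tmul p q =>
        simp [Algebra.TensorProduct.tmul_mul_tmul, ← W.comul_mul]
      | add a b ha hb => simp only [map_add, add_mul, ha, hb]
    calc Fin13 W ((TensorProduct.assoc k H H H).symm ((1:H) ⊗ₜ[k] W.comul 1)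
          * (W.comul h ⊗ₜ[k] (1:H)))
        = Fin13 W (((TensorProduct.assoc k H H H).symm ((1:H) ⊗ₜ[k] W.comul 1)
            * (W.comul 1 ⊗ₜ[k] (1:H))) * (W.comul h ⊗ₜ[k] (1:H))) := by
          rw [mul_assoc, Algebra.TensorProduct.tmul_mul_tmul, comul_one_mul, one_mul]
      _ = Fin13 W (rTensor H W.comul (W.comul 1) * (W.comul h ⊗ₜ[k] (1:H))) := by
          rw [← W.comul_one_right]
      _ = Fin13 W (rTensor H W.comul (W.comul 1 * (h ⊗ₜ[k] (1:H)))) := by rw [w2b]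
      _ = W.comul 1 * (h ⊗ₜ[k] (1:H)) := Fin13_rTensor_comul W _
  rw [← way1 (W.comul h)]
  exact way2.symm

/-- identity (c): `ε_s(h₁) ⊗ h₂ = 1₁ ⊗ h 1₂`. -/
lemma lemC (h : H) :
    rTensor H (eS W) (W.comul h) = ((1:H) ⊗ₜ[k] h) * W.comul 1 := by
  have way1 : ∀ t : H ⊗[k] H,
      Fin13 W ((TensorProduct.assoc k H H H).symm ((1:H) ⊗ₜ[k] t)
          * (W.comul 1 ⊗ₜ[k] (1:H)))
        = rTensor H (eS W) t := by
    intro t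
    induction t using TensorProduct.induction_on with
    | zero => simp
    | tmul u v =>
      have inner : ∀ s : H ⊗[k] H,
          Fin13 W ((TensorProduct.assoc k H H H).symm ((1:H) ⊗ₜ[k] (u ⊗ₜ[k] v))
              * (s ⊗ₜ[k] (1:H)))
            = (TensorProduct.rid k H
                (lTensor H (W.counit ∘ₗ mulLeft k u) s)) ⊗ₜ[k] v := by
        intro s
        induction s using TensorProduct.induction_on with
        | zero => simp
        | tmul p q =>
          simp [Algebra.TensorProduct.tmul_mul_tmul, Fin13_tmul, smul_tmul]
        | add a b ha hb =>
          simp only [LinearEquiv.map_add, add_mul, map_add, mul_add, ha, hb,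
            add_tmul, tmul_add]
      rw [inner]
      simp [eS_apply, epsS_def]
    | add a b ha hb =>
      simp only [tmul_add, add_tmul, add_mul, mul_add, map_add, ha, hb]
  have i3 : ∀ s : H ⊗[k] H,
      ((1:H) ⊗ₜ[k] W.comul h) * lTensor H W.comul s
        = lTensor H W.comul (lTensor H (mulLeft k h) s) := by
    intro s
    induction s using TensorProduct.induction_on with
    | zero => simp
    | tmul p q =>
      simp [Algebra.TensorProduct.tmul_mul_tmul, ← W.comul_mul]
    | add a b ha hb => simp only [map_add, mul_add, ha, hb]
  have key : (TensorProduct.assoc k H H H).symm ((1:H) ⊗ₜ[k] W.comul h)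
      * (W.comul 1 ⊗ₜ[k] (1:H))
      = (TensorProduct.assoc k H H H).symm
          (lTensor H W.comul (lTensor H (mulLeft k h) (W.comul 1))) := by
    have i1 : (TensorProduct.assoc k H H H).symm ((1:H) ⊗ₜ[k] W.comul h)
        = (TensorProduct.assoc k H H H).symm ((1:H) ⊗ₜ[k] W.comul h)
          * (TensorProduct.assoc k H H H).symm ((1:H) ⊗ₜ[k] W.comul 1) := by
      rw [← assoc_symm_mul, Algebra.TensorProduct.tmul_mul_tmul, one_mul, comul_mul_one]
    have i2 : rTensor H W.comul (W.comul 1)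
        = (TensorProduct.assoc k H H H).symm (lTensor H W.comul (W.comul 1)) := by
      rw [← W.coassoc 1, LinearEquiv.symm_apply_apply]
    calc (TensorProduct.assoc k H H H).symm ((1:H) ⊗ₜ[k] W.comul h)
          * (W.comul 1 ⊗ₜ[k] (1:H))
        = (TensorProduct.assoc k H H H).symm ((1:H) ⊗ₜ[k] W.comul h)
            * ((TensorProduct.assoc k H H H).symm ((1:H) ⊗ₜ[k] W.comul 1)
              * (W.comul 1 ⊗ₜ[k] (1:H))) := by
          conv_lhs => rw [i1]
          rw [mul_assoc]
      _ = (TensorProduct.assoc k H H H).symm ((1:H) ⊗ₜ[k] W.comul h)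
            * (TensorProduct.assoc k H H H).symm (lTensor H W.comul (W.comul 1)) := by
          rw [← W.comul_one_right, i2]
      _ = (TensorProduct.assoc k H H H).symm
            (((1:H) ⊗ₜ[k] W.comul h) * lTensor H W.comul (W.comul 1)) := by
          rw [assoc_symm_mul]
      _ = _ := by rw [i3]
  have w2d : ∀ s : H ⊗[k] H,
      Fin13 W ((TensorProduct.assoc k H H H).symm (lTensor H W.comul s)) = s := by
    intro s
    induction s using TensorProduct.induction_on with
    | zero => simp
    | tmul u v =>
      have inner : ∀ r : H ⊗[k] H,
          Fin13 W ((TensorProduct.assoc k H H H).symm (u ⊗ₜ[k] r))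
            = u ⊗ₜ[k] (TensorProduct.lid k H (rTensor H W.counit r)) := by
        intro r
        induction r using TensorProduct.induction_on with
        | zero => simp
        | tmul p q => simp [Fin13_tmul, smul_tmul, tmul_smul]
        | add a b ha hb => simp only [tmul_add, LinearEquiv.map_add, map_add, ha, hb]
      simp only [lTensor_tmul, inner, W.counit_left]
    | add a b ha hb => simp only [map_add, LinearEquiv.map_add, ha, hb]
  rw [← way1 (W.comul h), key, w2d, one_tmul_mul]

/-- `Δ(ε_t(y)) = (ε_t(y) ⊗ 1) Δ(1)`. -/
lemma D1 (y : H) : W.comul (eT W y) = (eT W y ⊗ₜ[k] (1:H)) * W.comul 1 := by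
  have D1a : ∀ s : H ⊗[k] H,
      W.comul (TensorProduct.lid k H (rTensor H (W.counit ∘ₗ mulRight k y) s))
        = (TensorProduct.lid k (H ⊗[k] H)).toLinearMap
            (rTensor (H ⊗[k] H) (W.counit ∘ₗ mulRight k y) (lTensor H W.comul s)) := by
    intro s
    induction s using TensorProduct.induction_on with
    | zero => simp
    | tmul p q => simp
    | add a b ha hb => simp only [map_add, LinearEquiv.map_add, ha, hb]
  have D1c : ∀ (s t : H ⊗[k] H),
      (TensorProduct.lid k (H ⊗[k] H)).toLinearMap
          (rTensor (H ⊗[k] H) (W.counit ∘ₗ mulRight k y)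
            (TensorProduct.assoc k H H H (s ⊗ₜ[k] (1:H)) * ((1:H) ⊗ₜ[k] t)))
        = ((TensorProduct.lid k H (rTensor H (W.counit ∘ₗ mulRight k y) s)) ⊗ₜ[k] (1:H))
            * t := by
    intro s t
    induction s using TensorProduct.induction_on with
    | zero => simp
    | tmul p q =>
      induction t using TensorProduct.induction_on with
      | zero => simp
      | tmul r w =>
        simp [Algebra.TensorProduct.tmul_mul_tmul, smul_mul_assoc, smul_tmul', mul_assoc]
      | add a b ha hb => simp only [tmul_add, mul_add, map_add, LinearEquiv.map_add, ha, hb]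
    | add a b ha hb =>
      simp only [add_tmul, add_mul, mul_add, map_add, LinearEquiv.map_add, ha, hb,
        smul_tmul']
  have hcoassoc : lTensor H W.comul (W.comul 1)
      = TensorProduct.assoc k H H H ((W.comul 1 ⊗ₜ[k] (1:H))
          * (TensorProduct.assoc k H H H).symm ((1:H) ⊗ₜ[k] W.comul 1)) := by
    rw [← W.comul_one_left, W.coassoc 1]
  rw [eT_apply, epsT_def, D1a, hcoassoc, assoc_mul, LinearEquiv.apply_symm_apply, D1c]

/-- `Δ(ε_t(y)) = Δ(1) (ε_t(y) ⊗ 1)`. -/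
lemma D1' (y : H) : W.comul (eT W y) = W.comul 1 * (eT W y ⊗ₜ[k] (1:H)) := by
  have D1a : ∀ s : H ⊗[k] H,
      W.comul (TensorProduct.lid k H (rTensor H (W.counit ∘ₗ mulRight k y) s))
        = (TensorProduct.lid k (H ⊗[k] H)).toLinearMap
            (rTensor (H ⊗[k] H) (W.counit ∘ₗ mulRight k y) (lTensor H W.comul s)) := by
    intro s
    induction s using TensorProduct.induction_on with
    | zero => simp
    | tmul p q => simp
    | add a b ha hb => simp only [map_add, LinearEquiv.map_add, ha, hb]
  have D1c : ∀ (t s : H ⊗[k] H),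
      (TensorProduct.lid k (H ⊗[k] H)).toLinearMap
          (rTensor (H ⊗[k] H) (W.counit ∘ₗ mulRight k y)
            (((1:H) ⊗ₜ[k] t) * TensorProduct.assoc k H H H (s ⊗ₜ[k] (1:H))))
        = t * ((TensorProduct.lid k H (rTensor H (W.counit ∘ₗ mulRight k y) s)) ⊗ₜ[k] (1:H)) := by
    intro t s
    induction s using TensorProduct.induction_on with
    | zero => simp
    | tmul p q =>
      induction t using TensorProduct.induction_on with
      | zero => simp
      | tmul r w =>
        simp [Algebra.TensorProduct.tmul_mul_tmul, mul_smul_comm, smul_tmul', mul_assoc]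
      | add a b ha hb =>
        simp only [tmul_add, add_mul, mul_add, map_add, LinearEquiv.map_add, ha, hb]
    | add a b ha hb =>
      simp only [add_tmul, add_mul, mul_add, map_add, LinearEquiv.map_add, ha, hb,
        smul_tmul']
  have hcoassoc : lTensor H W.comul (W.comul 1)
      = TensorProduct.assoc k H H H
          ((TensorProduct.assoc k H H H).symm ((1:H) ⊗ₜ[k] W.comul 1)
            * (W.comul 1 ⊗ₜ[k] (1:H))) := by
    rw [← W.comul_one_right, W.coassoc 1]
  rw [eT_apply, epsT_def, D1a, hcoassoc, assoc_mul, LinearEquiv.apply_symm_apply, D1c]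

/-- `Δ(ε_s(y)) = Δ(1) (1 ⊗ ε_s(y))`. -/
lemma D2 (y : H) : W.comul (eS W y) = W.comul 1 * ((1:H) ⊗ₜ[k] eS W y) := by
  have D2a : ∀ s : H ⊗[k] H,
      W.comul (TensorProduct.rid k H (lTensor H (W.counit ∘ₗ mulLeft k y) s))
        = (TensorProduct.rid k (H ⊗[k] H)).toLinearMap
            (lTensor (H ⊗[k] H) (W.counit ∘ₗ mulLeft k y) (rTensor H W.comul s)) := by
    intro s
    induction s using TensorProduct.induction_on with
    | zero => simp
    | tmul p q => simp
    | add a b ha hb => simp only [map_add, LinearEquiv.map_add, ha, hb]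
  have D2c : ∀ (s t : H ⊗[k] H),
      (TensorProduct.rid k (H ⊗[k] H)).toLinearMap
          (lTensor (H ⊗[k] H) (W.counit ∘ₗ mulLeft k y)
            ((s ⊗ₜ[k] (1:H)) * (TensorProduct.assoc k H H H).symm ((1:H) ⊗ₜ[k] t)))
        = s * ((1:H) ⊗ₜ[k] (TensorProduct.rid k H (lTensor H (W.counit ∘ₗ mulLeft k y) t))) := by
    intro s t
    induction t using TensorProduct.induction_on with
    | zero => simp
    | tmul r w =>
      simp [Algebra.TensorProduct.tmul_mul_tmul, mul_smul_comm, tmul_smul]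
    | add a b ha hb =>
      simp only [tmul_add, mul_add, map_add, LinearEquiv.map_add, ha, hb]
  rw [eS_apply, epsS_def, D2a, W.comul_one_left, D2c]

/-- `Δ(ε_s(y)) = (1 ⊗ ε_s(y)) Δ(1)`. -/
lemma D2' (y : H) : W.comul (eS W y) = ((1:H) ⊗ₜ[k] eS W y) * W.comul 1 := by
  have D2a : ∀ s : H ⊗[k] H,
      W.comul (TensorProduct.rid k H (lTensor H (W.counit ∘ₗ mulLeft k y) s))
        = (TensorProduct.rid k (H ⊗[k] H)).toLinearMap
            (lTensor (H ⊗[k] H) (W.counit ∘ₗ mulLeft k y) (rTensor H W.comul s)) := by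
    intro s
    induction s using TensorProduct.induction_on with
    | zero => simp
    | tmul p q => simp
    | add a b ha hb => simp only [map_add, LinearEquiv.map_add, ha, hb]
  have D2c : ∀ (t s : H ⊗[k] H),
      (TensorProduct.rid k (H ⊗[k] H)).toLinearMap
          (lTensor (H ⊗[k] H) (W.counit ∘ₗ mulLeft k y)
            ((TensorProduct.assoc k H H H).symm ((1:H) ⊗ₜ[k] t) * (s ⊗ₜ[k] (1:H))))
        = ((1:H) ⊗ₜ[k] (TensorProduct.rid k H (lTensor H (W.counit ∘ₗ mulLeft k y) t))) * s := by
    intro t s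
    induction t using TensorProduct.induction_on with
    | zero => simp
    | tmul r w =>
      simp [Algebra.TensorProduct.tmul_mul_tmul, smul_mul_assoc, tmul_smul]
    | add a b ha hb =>
      simp only [tmul_add, add_mul, map_add, LinearEquiv.map_add, ha, hb, add_tmul]
  rw [eS_apply, epsS_def, D2a, W.comul_one_right, D2c]

/-- `ε_t(y)` and `ε_s(x)` commute. -/
lemma com_ts (x y : H) : eT W y * eS W x = eS W x * eT W y := by
  have r1 : ∀ (w : H) (t : H ⊗[k] H),
      TensorProduct.rid k H (lTensor H (W.counit ∘ₗ mulLeft k x) ((w ⊗ₜ[k] (1:H)) * t))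
        = w * TensorProduct.rid k H (lTensor H (W.counit ∘ₗ mulLeft k x) t) := by
    intro w t
    induction t using TensorProduct.induction_on with
    | zero => simp
    | tmul p q => simp [Algebra.TensorProduct.tmul_mul_tmul, mul_smul_comm]
    | add a b ha hb => simp only [mul_add, map_add, LinearEquiv.map_add, ha, hb]
  have r2 : ∀ (w : H) (t : H ⊗[k] H),
      TensorProduct.rid k H (lTensor H (W.counit ∘ₗ mulLeft k x) (t * (w ⊗ₜ[k] (1:H))))
        = TensorProduct.rid k H (lTensor H (W.counit ∘ₗ mulLeft k x) t) * w := by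
    intro w t
    induction t using TensorProduct.induction_on with
    | zero => simp
    | tmul p q => simp [Algebra.TensorProduct.tmul_mul_tmul, smul_mul_assoc]
    | add a b ha hb => simp only [add_mul, map_add, LinearEquiv.map_add, ha, hb]
  have hx : eS W x = TensorProduct.rid k H
      (lTensor H (W.counit ∘ₗ mulLeft k x) (W.comul 1)) := by
    rw [eS_apply, epsS_def]
  calc eT W y * eS W x
      = TensorProduct.rid k H (lTensor H (W.counit ∘ₗ mulLeft k x)
          ((eT W y ⊗ₜ[k] (1:H)) * W.comul 1)) := by rw [r1, ← hx]
    _ = TensorProduct.rid k H (lTensor H (W.counit ∘ₗ mulLeft k x)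
          (W.comul 1 * (eT W y ⊗ₜ[k] (1:H)))) := by rw [← D1, D1']
    _ = eS W x * eT W y := by rw [r2, ← hx]

lemma lTensor_eq_map (f : H →ₗ[k] H) : lTensor H f = map LinearMap.id f := rfl
lemma rTensor_eq_map (f : H →ₗ[k] H) : rTensor H f = map f LinearMap.id := rfl

lemma eT_def2 (w : H) : eT W w = mul' k H (lTensor H W.antipode (W.comul w)) := rfl
lemma eS_def2 (w : H) : eS W w = mul' k H (rTensor H W.antipode (W.comul w)) := rfl

/-- `Σ 1₁ S(y 1₂) = S(y)`. -/
lemma CJ (y : H) :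
    mul' k H (lTensor H W.antipode (((1:H) ⊗ₜ[k] y) * W.comul 1)) = W.antipode y := by
  rw [← lemC]
  have : lTensor H W.antipode (rTensor H (eS W) (W.comul y))
      = map (eS W) W.antipode (W.comul y) := by
    rw [← comp_apply, lTensor_comp_rTensor]
  rw [this]
  exact antipode_eS W y

/-- `Σ S(1₁ y) 1₂ = S(y)`. -/
lemma CJ' (y : H) :
    mul' k H (rTensor H W.antipode (W.comul 1 * (y ⊗ₜ[k] (1:H)))) = W.antipode y := by
  rw [lemB]
  have : rTensor H W.antipode (lTensor H (eT W) (W.comul y))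
      = map W.antipode (eT W) (W.comul y) := by
    rw [← comp_apply, rTensor_comp_lTensor]
  rw [this]
  exact antipode_eT W y

lemma lTensorS_mul_left (u : H) (X : H ⊗[k] H) :
    lTensor H W.antipode ((u ⊗ₜ[k] (1:H)) * X) = (u ⊗ₜ[k] (1:H)) * lTensor H W.antipode X := by
  induction X using TensorProduct.induction_on with
  | zero => simp
  | tmul p q => simp [Algebra.TensorProduct.tmul_mul_tmul]
  | add a b ha hb => simp only [mul_add, map_add, ha, hb]

lemma rTensorS_mul_right (v : H) (X : H ⊗[k] H) :
    rTensor H W.antipode (X * ((1:H) ⊗ₜ[k] v)) = rTensor H W.antipode X * ((1:H) ⊗ₜ[k] v) := by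
  induction X using TensorProduct.induction_on with
  | zero => simp
  | tmul p q => simp [Algebra.TensorProduct.tmul_mul_tmul]
  | add a b ha hb => simp only [add_mul, map_add, ha, hb]

/-- absorption `J`: multiplying by `Δ(1)` on the right is invisible to `m∘(id⊗S)`. -/
lemma lemJ (t : H ⊗[k] H) :
    mul' k H (lTensor H W.antipode (t * W.comul 1))
      = mul' k H (lTensor H W.antipode t) := by
  induction t using TensorProduct.induction_on with
  | zero => simp
  | tmul u v =>
    have : (u ⊗ₜ[k] v) * W.comul 1 = (u ⊗ₜ[k] (1:H)) * (((1:H) ⊗ₜ[k] v) * W.comul 1) := by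
      rw [← mul_assoc, Algebra.TensorProduct.tmul_mul_tmul, mul_one, one_mul]
    rw [this, lTensorS_mul_left, mu_mul_left, CJ]
    simp
  | add a b ha hb => simp only [add_mul, map_add, ha, hb]

/-- absorption `J'`: multiplying by `Δ(1)` on the left is invisible to `m∘(S⊗id)`. -/
lemma lemJ' (t : H ⊗[k] H) :
    mul' k H (rTensor H W.antipode (W.comul 1 * t))
      = mul' k H (rTensor H W.antipode t) := by
  induction t using TensorProduct.induction_on with
  | zero => simp
  | tmul u v =>
    have : W.comul 1 * (u ⊗ₜ[k] v) = (W.comul 1 * (u ⊗ₜ[k] (1:H))) * ((1:H) ⊗ₜ[k] v) := by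
      rw [mul_assoc, Algebra.TensorProduct.tmul_mul_tmul, mul_one, one_mul]
    rw [this, rTensorS_mul_right, mu_mul_right, CJ']
    simp
  | add a b ha hb => simp only [mul_add, map_add, ha, hb]

/-- the adjoint-type lemma: `Σ y₁ ε_t(z) S(y₂) = ε_t(y ε_t(z))`. -/
lemma lemAd (y z : H) :
    mul' k H (lTensor H W.antipode (W.comul y * (eT W z ⊗ₜ[k] (1:H))))
      = eT W (y * eT W z) := by
  rw [eT_def2 W (y * eT W z), W.comul_mul, D1, ← mul_assoc, lemJ]

/-- mirror adjoint lemma: `Σ S(y₁) ε_s(x) y₂ = ε_s(ε_s(x) y)`. -/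
lemma lemAd' (x y : H) :
    mul' k H (rTensor H W.antipode (((1:H) ⊗ₜ[k] eS W x) * W.comul y))
      = eS W (eS W x * y) := by
  rw [eS_def2 W (eS W x * y), W.comul_mul, D2, mul_assoc, lemJ']

/-- `ε(p ε_t(z)) = ε(p z)`. -/
lemma f1scalar (p z : H) : W.counit (p * eT W z) = W.counit (p * z) := by
  have aux : ∀ s : H ⊗[k] H,
      W.counit (p * TensorProduct.lid k H (rTensor H (W.counit ∘ₗ mulRight k z) s))
        = mul' k k (map W.counit W.counit
            ((p ⊗ₜ[k] (1:H)) * (TensorProduct.comm k H H s) * ((1:H) ⊗ₜ[k] z))) := by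
    intro s
    induction s using TensorProduct.induction_on with
    | zero => simp
    | tmul r w =>
      simp [Algebra.TensorProduct.tmul_mul_tmul, mul_smul_comm, mul_comm]
    | add a b ha hb =>
      simp only [map_add, LinearEquiv.map_add, mul_add, add_mul, ha, hb]
  rw [eT_apply, epsT_def, aux (W.comul 1), W.counit_weak' p 1 z, mul_one]

/-- `ε(ε_s(x) v) = ε(x v)`. -/
lemma f1scalar' (x v : H) : W.counit (eS W x * v) = W.counit (x * v) := by
  have aux : ∀ s : H ⊗[k] H,
      W.counit (TensorProduct.rid k H (lTensor H (W.counit ∘ₗ mulLeft k x) s) * v)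
        = mul' k k (map W.counit W.counit
            ((x ⊗ₜ[k] (1:H)) * (TensorProduct.comm k H H s) * ((1:H) ⊗ₜ[k] v))) := by
    intro s
    induction s using TensorProduct.induction_on with
    | zero => simp
    | tmul r w =>
      simp [Algebra.TensorProduct.tmul_mul_tmul, smul_mul_assoc, mul_comm]
    | add a b ha hb =>
      simp only [map_add, LinearEquiv.map_add, mul_add, add_mul, ha, hb]
  rw [eS_apply, epsS_def, aux (W.comul 1), W.counit_weak' x 1 v, mul_one]

/-- `ε_t(y ε_t(z)) = ε_t(y z)`. -/
lemma f1 (y z : H) : eT W (y * eT W z) = eT W (y * z) := by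
  have key : ∀ s : H ⊗[k] H,
      rTensor H (W.counit ∘ₗ mulRight k (y * eT W z)) s
        = rTensor H (W.counit ∘ₗ mulRight k (y * z)) s := by
    intro s
    induction s using TensorProduct.induction_on with
    | zero => simp
    | tmul pp q =>
      simp only [rTensor_tmul, comp_apply, mulRight_apply]
      rw [← mul_assoc, ← mul_assoc, f1scalar]
    | add a b ha hb => simp only [map_add, ha, hb]
  rw [eT_apply W (y * eT W z), epsT_def W (y * eT W z), key (W.comul 1),
    eT_apply W (y * z), epsT_def W (y * z)]

/-- `ε_s(ε_s(x) y) = ε_s(x y)`. -/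
lemma f1' (x y : H) : eS W (eS W x * y) = eS W (x * y) := by
  have key : ∀ s : H ⊗[k] H,
      lTensor H (W.counit ∘ₗ mulLeft k (eS W x * y)) s
        = lTensor H (W.counit ∘ₗ mulLeft k (x * y)) s := by
    intro s
    induction s using TensorProduct.induction_on with
    | zero => simp
    | tmul pp q =>
      simp only [lTensor_tmul, comp_apply, mulLeft_apply]
      rw [mul_assoc, mul_assoc, f1scalar']
    | add a b ha hb => simp only [map_add, ha, hb]
  rw [eS_apply W (eS W x * y), epsS_def W (eS W x * y), key (W.comul 1),
    eS_apply W (x * y), epsS_def W (x * y)]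

/-- `(S ⊗ id)(Δ 1) = (ε_t ⊗ id)(Δ 1)`. -/
lemma U1 : rTensor H W.antipode (W.comul 1) = rTensor H (eT W) (W.comul 1) := by
  have gdef : rTensor H (eS W) ∘ₗ W.comul
      = mulRight k (W.comul 1) ∘ₗ TensorProduct.mk k H H (1:H) :=
    LinearMap.ext fun y => by simpa using lemC W y
  have BB' : ∀ s t : H ⊗[k] H,
      rTensor H (mulRight k t ∘ₗ TensorProduct.mk k H H (1:H)) s
        = (TensorProduct.assoc k H H H).symm ((1:H) ⊗ₜ[k] s) * (t ⊗ₜ[k] (1:H)) := by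
    intro s t
    induction s using TensorProduct.induction_on with
    | zero => simp
    | tmul p q =>
      simp only [rTensor_tmul, comp_apply, mulRight_apply, TensorProduct.mk_apply,
        assoc_symm_tmul]
      induction t using TensorProduct.induction_on with
      | zero => simp
      | tmul r w => simp [Algebra.TensorProduct.tmul_mul_tmul]
      | add a b ha hb => simp only [mul_add, add_tmul, ha, hb]
    | add a b ha hb =>
      simp only [map_add, add_mul, tmul_add, add_tmul, LinearEquiv.map_add, ha, hb]
  have Lam : rTensor H (rTensor H (eS W) ∘ₗ W.comul) (W.comul 1)
      = rTensor H W.comul (W.comul 1) := by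
    rw [gdef, BB' (W.comul 1) (W.comul 1), ← W.comul_one_right]
  have hF : W.antipode
      = mul' k H ∘ₗ lTensor H W.antipode ∘ₗ rTensor H (eS W) ∘ₗ W.comul := by
    apply LinearMap.ext
    intro y
    rw [comp_apply, comp_apply, comp_apply, ← comp_apply (lTensor H W.antipode),
      lTensor_comp_rTensor]
    exact (antipode_eS W y).symm
  have hE : eT W = mul' k H ∘ₗ lTensor H W.antipode ∘ₗ W.comul := rfl
  calc rTensor H W.antipode (W.comul 1)
      = rTensor H (mul' k H ∘ₗ lTensor H W.antipode ∘ₗ rTensor H (eS W) ∘ₗ W.comul)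
          (W.comul 1) := by rw [← hF]
    _ = rTensor H (mul' k H) (rTensor H (lTensor H W.antipode)
          (rTensor H (rTensor H (eS W) ∘ₗ W.comul) (W.comul 1))) := by
        rw [rTensor_comp, rTensor_comp, comp_apply, comp_apply]
    _ = rTensor H (mul' k H) (rTensor H (lTensor H W.antipode)
          (rTensor H W.comul (W.comul 1))) := by rw [Lam]
    _ = rTensor H (mul' k H ∘ₗ lTensor H W.antipode ∘ₗ W.comul) (W.comul 1) := by
        rw [rTensor_comp, rTensor_comp, comp_apply, comp_apply]
    _ = rTensor H (eT W) (W.comul 1) := by rw [← hE]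

/-- `(id ⊗ S)(Δ 1) = (id ⊗ ε_s)(Δ 1)`. -/
lemma U2 : lTensor H W.antipode (W.comul 1) = lTensor H (eS W) (W.comul 1) := by
  have gdef : lTensor H (eT W) ∘ₗ W.comul
      = mulLeft k (W.comul 1) ∘ₗ (TensorProduct.mk k H H).flip (1:H) :=
    LinearMap.ext fun y => by simpa using (lemB W y).symm
  have BB'2 : ∀ s t : H ⊗[k] H,
      lTensor H (mulLeft k t ∘ₗ (TensorProduct.mk k H H).flip (1:H)) s
        = ((1:H) ⊗ₜ[k] t) * TensorProduct.assoc k H H H (s ⊗ₜ[k] (1:H)) := by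
    intro s t
    induction s using TensorProduct.induction_on with
    | zero => simp
    | tmul p q =>
      simp only [lTensor_tmul, comp_apply, mulLeft_apply, flip_apply,
        TensorProduct.mk_apply, assoc_tmul]
      induction t using TensorProduct.induction_on with
      | zero => simp
      | tmul r w => simp [Algebra.TensorProduct.tmul_mul_tmul]
      | add a b ha hb => simp only [add_mul, mul_add, tmul_add, add_tmul, ha, hb]
    | add a b ha hb =>
      simp only [map_add, add_mul, mul_add, tmul_add, add_tmul, LinearEquiv.map_add,
        ha, hb]
  have Lam : lTensor H (lTensor H (eT W) ∘ₗ W.comul) (W.comul 1)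
      = lTensor H W.comul (W.comul 1) := by
    rw [gdef, BB'2 (W.comul 1) (W.comul 1)]
    rw [show ((1:H) ⊗ₜ[k] W.comul 1) * TensorProduct.assoc k H H H (W.comul 1 ⊗ₜ[k] (1:H))
        = TensorProduct.assoc k H H H
            ((TensorProduct.assoc k H H H).symm ((1:H) ⊗ₜ[k] W.comul 1)
              * (W.comul 1 ⊗ₜ[k] (1:H))) by
      rw [assoc_mul, LinearEquiv.apply_symm_apply]]
    rw [← W.comul_one_right, W.coassoc 1]
  have hF : W.antipode
      = mul' k H ∘ₗ rTensor H W.antipode ∘ₗ lTensor H (eT W) ∘ₗ W.comul := by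
    apply LinearMap.ext
    intro y
    rw [comp_apply, comp_apply, comp_apply, ← comp_apply (rTensor H W.antipode),
      rTensor_comp_lTensor]
    exact (antipode_eT W y).symm
  have hE : eS W = mul' k H ∘ₗ rTensor H W.antipode ∘ₗ W.comul := rfl
  calc lTensor H W.antipode (W.comul 1)
      = lTensor H (mul' k H ∘ₗ rTensor H W.antipode ∘ₗ lTensor H (eT W) ∘ₗ W.comul)
          (W.comul 1) := by rw [← hF]
    _ = lTensor H (mul' k H) (lTensor H (rTensor H W.antipode)
          (lTensor H (lTensor H (eT W) ∘ₗ W.comul) (W.comul 1))) := by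
        rw [lTensor_comp, lTensor_comp, comp_apply, comp_apply]
    _ = lTensor H (mul' k H) (lTensor H (rTensor H W.antipode)
          (lTensor H W.comul (W.comul 1))) := by rw [Lam]
    _ = lTensor H (mul' k H ∘ₗ rTensor H W.antipode ∘ₗ W.comul) (W.comul 1) := by
        rw [lTensor_comp, lTensor_comp, comp_apply, comp_apply]
    _ = lTensor H (eS W) (W.comul 1) := by rw [← hE]

/-- `κ(y) = 1₁ ε(1₂ y)`. -/
noncomputable def kap (W : WeakHopfData k H) (y : H) : H :=
  TensorProduct.rid k H (lTensor H (W.counit ∘ₗ mulRight k y) (W.comul 1))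

/-- `ρ(y) = ε(y 1₁) 1₂`. -/
noncomputable def rho (W : WeakHopfData k H) (y : H) : H :=
  TensorProduct.lid k H (rTensor H (W.counit ∘ₗ mulLeft k y) (W.comul 1))

lemma counit_kap (p y : H) : W.counit (p * kap W y) = W.counit (p * y) := by
  have aux : ∀ s : H ⊗[k] H,
      W.counit (p * TensorProduct.rid k H (lTensor H (W.counit ∘ₗ mulRight k y) s))
        = mul' k k (map W.counit W.counit
            ((p ⊗ₜ[k] (1:H)) * s * ((1:H) ⊗ₜ[k] y))) := by
    intro s
    induction s using TensorProduct.induction_on with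
    | zero => simp
    | tmul r w =>
      simp [Algebra.TensorProduct.tmul_mul_tmul, mul_smul_comm, mul_comm]
    | add a b ha hb =>
      simp only [map_add, LinearEquiv.map_add, mul_add, add_mul, ha, hb]
  rw [kap, aux (W.comul 1), W.counit_weak p 1 y, mul_one]

lemma counit_rho (y q : H) : W.counit (rho W y * q) = W.counit (y * q) := by
  have aux : ∀ s : H ⊗[k] H,
      W.counit (TensorProduct.lid k H (rTensor H (W.counit ∘ₗ mulLeft k y) s) * q)
        = mul' k k (map W.counit W.counit
            ((y ⊗ₜ[k] (1:H)) * s * ((1:H) ⊗ₜ[k] q))) := by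
    intro s
    induction s using TensorProduct.induction_on with
    | zero => simp
    | tmul r w =>
      simp [Algebra.TensorProduct.tmul_mul_tmul, smul_mul_assoc, mul_comm]
    | add a b ha hb =>
      simp only [map_add, LinearEquiv.map_add, mul_add, add_mul, ha, hb]
  rw [rho, aux (W.comul 1), W.counit_weak y 1 q, mul_one]

/-- key: `ε_t = S ∘ κ`. -/
lemma S_kap (y : H) : W.antipode (kap W y) = eT W y := by
  have sub1 : ∀ (f : H →ₗ[k] H) (s : H ⊗[k] H),
      f (TensorProduct.rid k H (lTensor H (W.counit ∘ₗ mulRight k y) s))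
        = TensorProduct.rid k H
            (lTensor H (W.counit ∘ₗ mulRight k y) (rTensor H f s)) := by
    intro f s
    induction s using TensorProduct.induction_on with
    | zero => simp
    | tmul p q => simp
    | add a b ha hb => simp only [map_add, LinearEquiv.map_add, ha, hb]
  have e1 : W.antipode (kap W y)
      = TensorProduct.rid k H (lTensor H (W.counit ∘ₗ mulRight k y)
          (rTensor H W.antipode (W.comul 1))) := sub1 W.antipode (W.comul 1)
  rw [e1, U1, ← sub1 (eT W) (W.comul 1)]
  show eT W (kap W y) = eT W y
  have key : ∀ s : H ⊗[k] H,
      rTensor H (W.counit ∘ₗ mulRight k (kap W y)) s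
        = rTensor H (W.counit ∘ₗ mulRight k y) s := by
    intro s
    induction s using TensorProduct.induction_on with
    | zero => simp
    | tmul p q =>
      simp only [rTensor_tmul, comp_apply, mulRight_apply]
      rw [counit_kap]
    | add a b ha hb => simp only [map_add, ha, hb]
  rw [eT_apply W (kap W y), epsT_def W (kap W y), key (W.comul 1),
    eT_apply W y, epsT_def W y]

/-- key: `ε_s = S ∘ ρ`. -/
lemma S_rho (y : H) : W.antipode (rho W y) = eS W y := by
  have sub1 : ∀ (f : H →ₗ[k] H) (s : H ⊗[k] H),
      f (TensorProduct.lid k H (rTensor H (W.counit ∘ₗ mulLeft k y) s))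
        = TensorProduct.lid k H
            (rTensor H (W.counit ∘ₗ mulLeft k y) (lTensor H f s)) := by
    intro f s
    induction s using TensorProduct.induction_on with
    | zero => simp
    | tmul p q => simp
    | add a b ha hb => simp only [map_add, LinearEquiv.map_add, ha, hb]
  have e1 : W.antipode (rho W y)
      = TensorProduct.lid k H (rTensor H (W.counit ∘ₗ mulLeft k y)
          (lTensor H W.antipode (W.comul 1))) := sub1 W.antipode (W.comul 1)
  rw [e1, U2, ← sub1 (eS W) (W.comul 1)]
  show eS W (rho W y) = eS W y
  have key : ∀ s : H ⊗[k] H,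
      lTensor H (W.counit ∘ₗ mulLeft k (rho W y)) s
        = lTensor H (W.counit ∘ₗ mulLeft k y) s := by
    intro s
    induction s using TensorProduct.induction_on with
    | zero => simp
    | tmul p q =>
      simp only [lTensor_tmul, comp_apply, mulLeft_apply]
      rw [counit_rho]
    | add a b ha hb => simp only [map_add, ha, hb]
  rw [eS_apply W (rho W y), epsS_def W (rho W y), key (W.comul 1),
    eS_apply W y, epsS_def W y]

/-- `F(u ⊗ v) = S(v) S(u)`. -/
noncomputable def Fm (W : WeakHopfData k H) : H ⊗[k] H →ₗ[k] H :=
  mul' k H ∘ₗ map W.antipode W.antipode ∘ₗ (TensorProduct.comm k H H).toLinearMap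

lemma Fm_tmul (u v : H) : Fm W (u ⊗ₜ[k] v) = W.antipode v * W.antipode u := by
  simp [Fm]

noncomputable def AdM (W : WeakHopfData k H) : H ⊗[k] H →ₗ[k] H :=
  mul' k H ∘ₗ lTensor H W.antipode ∘ₗ LinearMap.mul' k (H ⊗[k] H)
    ∘ₗ map W.comul ((TensorProduct.mk k H H).flip (1:H))

lemma AdM_tmul (y z : H) :
    AdM W (y ⊗ₜ[k] z)
      = mul' k H (lTensor H W.antipode (W.comul y * (z ⊗ₜ[k] (1:H)))) := by
  simp [AdM]

/-- `gm(a ⊗ z) = z S(a)`. -/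
noncomputable def gm (W : WeakHopfData k H) : H ⊗[k] H →ₗ[k] H :=
  mul' k H ∘ₗ lTensor H W.antipode ∘ₗ (TensorProduct.comm k H H).toLinearMap

lemma gm_tmul (a z : H) : gm W (a ⊗ₜ[k] z) = z * W.antipode a := by simp [gm]

/-- `fm1((a₁ ⊗ a₂) ⊗ b₁) = S(a₁ b₁) a₂`. -/
noncomputable def fm1 (W : WeakHopfData k H) : (H ⊗[k] H) ⊗[k] H →ₗ[k] H :=
  mul' k H ∘ₗ (TensorProduct.comm k H H).toLinearMap
    ∘ₗ lTensor H (W.antipode ∘ₗ mul' k H)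
    ∘ₗ (TensorProduct.assoc k H H H).toLinearMap
    ∘ₗ rTensor H (TensorProduct.comm k H H).toLinearMap

lemma fm1_tmul (a₁ a₂ b₁ : H) :
    fm1 W ((a₁ ⊗ₜ[k] a₂) ⊗ₜ[k] b₁) = W.antipode (a₁ * b₁) * a₂ := by
  simp [fm1]

/-- `fm2(a₁ ⊗ b₁) = S(b₁) ε_s(a₁)`. -/
noncomputable def fm2 (W : WeakHopfData k H) : H ⊗[k] H →ₗ[k] H :=
  mul' k H ∘ₗ map W.antipode (eS W) ∘ₗ (TensorProduct.comm k H H).toLinearMap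

lemma fm2_tmul (a₁ b₁ : H) :
    fm2 W (a₁ ⊗ₜ[k] b₁) = W.antipode b₁ * eS W a₁ := by simp [fm2]

/-- `M1((u⊗v)⊗(p⊗q)) = S(up) (vq)`. -/
noncomputable def M1 (W : WeakHopfData k H) : (H ⊗[k] H) ⊗[k] (H ⊗[k] H) →ₗ[k] H :=
  mul' k H ∘ₗ rTensor H W.antipode ∘ₗ LinearMap.mul' k (H ⊗[k] H)

/-- `ξ'(x ⊗ t) = m (S⊗id) ((1 ⊗ ε_s x) t)`. -/
noncomputable def xi' (W : WeakHopfData k H) : H ⊗[k] (H ⊗[k] H) →ₗ[k] H :=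
  mul' k H ∘ₗ rTensor H W.antipode ∘ₗ LinearMap.mul' k (H ⊗[k] H)
    ∘ₗ rTensor (H ⊗[k] H) (TensorProduct.mk k H H (1:H) ∘ₗ eS W)

/-- `π'(u ⊗ v) = u S(v)`. -/
noncomputable def pim (W : WeakHopfData k H) : H ⊗[k] H →ₗ[k] H :=
  mul' k H ∘ₗ lTensor H W.antipode

lemma pim_comul : pim W ∘ₗ W.comul = eT W := rfl

/-- the `Θ₃` finisher of chain 1. -/
noncomputable def Th3 (W : WeakHopfData k H) :
    ((H ⊗[k] H) ⊗[k] H) ⊗[k] (H ⊗[k] H) →ₗ[k] H :=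
  mul' k H ∘ₗ map (fm1 W) (gm W)
    ∘ₗ (tensorTensorTensorComm k (H ⊗[k] H) H H H).toLinearMap

/-- the `Θ₇` finisher of chain 1. -/
noncomputable def Th7 (W : WeakHopfData k H) :
    (H ⊗[k] H) ⊗[k] (H ⊗[k] H) →ₗ[k] H :=
  mul' k H ∘ₗ map (W.antipode ∘ₗ mul' k H) (AdM W)
    ∘ₗ (tensorTensorTensorComm k H H H H).toLinearMap

/-- the `κ₄` finisher of chain 2. -/
noncomputable def Ka4 (W : WeakHopfData k H) :
    (H ⊗[k] H) ⊗[k] (H ⊗[k] H) →ₗ[k] H :=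
  mul' k H ∘ₗ map (fm2 W) (gm W)
    ∘ₗ (tensorTensorTensorComm k H H H H).toLinearMap

/-- the `κ₅` finisher of chain 2. -/
noncomputable def Ka5 (W : WeakHopfData k H) :
    (H ⊗[k] H) ⊗[k] (H ⊗[k] H) →ₗ[k] H :=
  mul' k H ∘ₗ map (mul' k H ∘ₗ rTensor H W.antipode) (mul' k H ∘ₗ map (eS W) W.antipode)
    ∘ₗ (TensorProduct.comm k (H ⊗[k] H) (H ⊗[k] H)).toLinearMap

/-- `(m ⊗ m) ∘ ttt = m` on `(H⊗H)⊗(H⊗H)`. -/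
lemma TMmap :
    map (mul' k H) (mul' k H)
        ∘ₗ (tensorTensorTensorComm k H H H H).toLinearMap
      = LinearMap.mul' k (H ⊗[k] H) := by
  ext x y p q
  simp [Algebra.TensorProduct.tmul_mul_tmul]

/-- chain 1 : the pivot equals `S(ab)`. -/
lemma chain1 (a b : H) :
    mul' k H (map (eS W ∘ₗ mul' k H) (Fm W)
        (tensorTensorTensorComm k H H H H (W.comul a ⊗ₜ[k] W.comul b)))
      = W.antipode (a * b) := by
  have h1 : eS W ∘ₗ mul' k H = M1 W ∘ₗ map W.comul W.comul := by
    ext x y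
    simp [M1, eS_def2, W.comul_mul]
  have h2 : map (eS W ∘ₗ mul' k H) (Fm W)
      = map (M1 W) (Fm W) ∘ₗ map (map W.comul W.comul) LinearMap.id := by
    rw [h1, ← TensorProduct.map_comp, comp_id]
  have h3 : (map (map W.comul W.comul) (LinearMap.id (R := k) (M := H ⊗[k] H)))
        ∘ₗ (tensorTensorTensorComm k H H H H).toLinearMap
      = (tensorTensorTensorComm k (H ⊗[k] H) H (H ⊗[k] H) H).toLinearMap
          ∘ₗ map (rTensor H W.comul) (rTensor H W.comul) := by
    ext x y p q
    simp
  have hb3 : rTensor H W.comul (W.comul b)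
      = (TensorProduct.assoc k H H H).symm (lTensor H W.comul (W.comul b)) := by
    rw [← W.coassoc b, LinearEquiv.symm_apply_apply]
  have ha3 : rTensor H W.comul (W.comul a)
      = (TensorProduct.assoc k H H H).symm (lTensor H W.comul (W.comul a)) := by
    rw [← W.coassoc a, LinearEquiv.symm_apply_apply]
  have h4 : mul' k H ∘ₗ map (M1 W) (Fm W)
        ∘ₗ (tensorTensorTensorComm k (H ⊗[k] H) H (H ⊗[k] H) H).toLinearMap
        ∘ₗ lTensor ((H ⊗[k] H) ⊗[k] H) (TensorProduct.assoc k H H H).symm.toLinearMap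
      = Th3 W ∘ₗ lTensor ((H ⊗[k] H) ⊗[k] H) (lTensor H (pim W)) := by
    ext a₁ a₂ a₃ b₁ b₂ b₃
    simp [M1, Th3, Fm, gm, fm1, pim, Algebra.TensorProduct.tmul_mul_tmul, mul_assoc]
  have h6 : Th3 W ∘ₗ rTensor (H ⊗[k] H)
        ((TensorProduct.assoc k H H H).symm.toLinearMap ∘ₗ lTensor H W.comul)
      = Th7 W := by
    ext a₁ y b₁ z
    simp only [AlgebraTensorModule.curry_apply, TensorProduct.curry_apply,
      LinearMap.coe_restrictScalars, comp_apply, rTensor_tmul, lTensor_tmul,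
      LinearEquiv.coe_coe]
    have sub : ∀ t : H ⊗[k] H,
        Th3 W ((TensorProduct.assoc k H H H).symm (a₁ ⊗ₜ[k] t) ⊗ₜ[k] (b₁ ⊗ₜ[k] z))
          = W.antipode (a₁ * b₁)
              * mul' k H (lTensor H W.antipode (t * (z ⊗ₜ[k] (1:H)))) := by
      intro t
      induction t using TensorProduct.induction_on with
      | zero => simp
      | tmul u v =>
        simp [Th3, fm1_tmul, gm_tmul, Algebra.TensorProduct.tmul_mul_tmul, mul_assoc]
      | add s t hs ht =>
        simp only [tmul_add, add_tmul, add_mul, mul_add, map_add, LinearEquiv.map_add,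
          hs, ht]
    rw [sub (W.comul y)]
    simp only [Th7, comp_apply, LinearEquiv.coe_coe, tensorTensorTensorComm_tmul,
      map_tmul, mul'_apply, AdM_tmul]
  have h7 : Th7 W ∘ₗ lTensor (H ⊗[k] H) (lTensor H (eT W))
      = mul' k H ∘ₗ map (W.antipode ∘ₗ mul' k H) (eT W ∘ₗ mul' k H)
          ∘ₗ (tensorTensorTensorComm k H H H H).toLinearMap := by
    ext a₁ y b₁ v
    simp only [AlgebraTensorModule.curry_apply, TensorProduct.curry_apply,
      LinearMap.coe_restrictScalars, comp_apply, lTensor_tmul, LinearEquiv.coe_coe,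
      tensorTensorTensorComm_tmul, map_tmul, mul'_apply, Th7, AdM_tmul]
    rw [lemAd, f1]
  have h8 : map (W.antipode ∘ₗ mul' k H) (eT W ∘ₗ mul' k H)
      = map W.antipode (eT W) ∘ₗ map (mul' k H) (mul' k H) := by
    rw [← TensorProduct.map_comp]
  -- assemble
  have e2 := LinearMap.congr_fun h3 (W.comul a ⊗ₜ[k] W.comul b)
  simp only [comp_apply, LinearEquiv.coe_coe, map_tmul, id_coe, id_eq] at e2
  have e4 := LinearMap.congr_fun h4
    (rTensor H W.comul (W.comul a) ⊗ₜ[k] lTensor H W.comul (W.comul b))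
  simp only [comp_apply, LinearEquiv.coe_coe, lTensor_tmul] at e4
  have e6 := LinearMap.congr_fun h6 (W.comul a ⊗ₜ[k] lTensor H (eT W) (W.comul b))
  simp only [comp_apply, LinearEquiv.coe_coe, rTensor_tmul] at e6
  have e7 := LinearMap.congr_fun h7 (W.comul a ⊗ₜ[k] W.comul b)
  simp only [comp_apply, LinearEquiv.coe_coe, lTensor_tmul] at e7
  have eTM := LinearMap.congr_fun TMmap (W.comul a ⊗ₜ[k] W.comul b)
  simp only [comp_apply, LinearEquiv.coe_coe] at eTM
  have hcomp : lTensor H (pim W) (lTensor H W.comul (W.comul b))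
      = lTensor H (eT W) (W.comul b) := by
    rw [← comp_apply, ← lTensor_comp, pim_comul]
  rw [h2, comp_apply, e2, ← hb3] at *
  -- goal: mul' (map M1 Fm (ttt₂ (rTδa ⊗ rTδb))) = S(ab)
  rw [hb3, e4, hcomp, ha3, e6, e7, h8, comp_apply, eTM]
  have hmul : (LinearMap.mul' k (H ⊗[k] H)) (W.comul a ⊗ₜ[k] W.comul b)
      = W.comul (a * b) := by
    rw [mul'_apply, ← W.comul_mul]
  rw [hmul]
  exact antipode_eT W (a * b)

/-- chain 2 : the pivot equals `S(b) S(a)`. -/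
lemma chain2 (a b : H) :
    mul' k H (map (eS W ∘ₗ mul' k H) (Fm W)
        (tensorTensorTensorComm k H H H H (W.comul a ⊗ₜ[k] W.comul b)))
      = W.antipode b * W.antipode a := by
  have hxi : eS W ∘ₗ mul' k H = xi' W ∘ₗ lTensor H W.comul := by
    ext x y
    simp only [AlgebraTensorModule.curry_apply, TensorProduct.curry_apply,
      LinearMap.coe_restrictScalars, comp_apply, mul'_apply, lTensor_tmul, xi',
      rTensor_tmul, TensorProduct.mk_apply]
    rw [lemAd', f1']
  have h2 : map (eS W ∘ₗ mul' k H) (Fm W)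
      = map (xi' W) (Fm W) ∘ₗ map (lTensor H W.comul) LinearMap.id := by
    rw [hxi, ← TensorProduct.map_comp, comp_id]
  have h3 : (map (lTensor H W.comul) (LinearMap.id (R := k) (M := H ⊗[k] H)))
        ∘ₗ (tensorTensorTensorComm k H H H H).toLinearMap
      = (tensorTensorTensorComm k H H (H ⊗[k] H) H).toLinearMap
          ∘ₗ map LinearMap.id (rTensor H W.comul) := by
    ext x y p q
    simp
  have hb3 : rTensor H W.comul (W.comul b)
      = (TensorProduct.assoc k H H H).symm (lTensor H W.comul (W.comul b)) := by
    rw [← W.coassoc b, LinearEquiv.symm_apply_apply]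
  have h4 : mul' k H ∘ₗ map (xi' W) (Fm W)
        ∘ₗ (tensorTensorTensorComm k H H (H ⊗[k] H) H).toLinearMap
        ∘ₗ lTensor (H ⊗[k] H) (TensorProduct.assoc k H H H).symm.toLinearMap
      = Ka4 W ∘ₗ lTensor (H ⊗[k] H) (lTensor H (pim W)) := by
    ext a₁ a₂ b₁ b₂ b₃
    simp [xi', Ka4, Fm, gm, fm2, pim, Algebra.TensorProduct.tmul_mul_tmul, mul_assoc]
  have h6 : Ka4 W ∘ₗ lTensor (H ⊗[k] H) (lTensor H (eT W))
      = Ka5 W ∘ₗ lTensor (H ⊗[k] H) (lTensor H (eT W)) := by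
    ext a₁ a₂ b₁ v
    simp only [AlgebraTensorModule.curry_apply, TensorProduct.curry_apply,
      LinearMap.coe_restrictScalars, comp_apply, lTensor_tmul]
    simp [Ka4, Ka5, fm2, gm, Algebra.TensorProduct.tmul_mul_tmul]
    rw [mul_assoc, mul_assoc]
    congr 1
    rw [← mul_assoc, ← com_ts, mul_assoc]
  have final : ∀ A B : H ⊗[k] H,
      Ka5 W (A ⊗ₜ[k] lTensor H (eT W) B)
        = mul' k H (map W.antipode (eT W) B) * mul' k H (map (eS W) W.antipode A) := by
    intro A B
    simp only [Ka5, comp_apply, LinearEquiv.coe_coe, TensorProduct.comm_tmul,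
      map_tmul, mul'_apply]
    have : rTensor H W.antipode (lTensor H (eT W) B)
        = map W.antipode (eT W) B := by
      rw [← comp_apply, rTensor_comp_lTensor]
    rw [this]
  -- assemble
  have e2 := LinearMap.congr_fun h3 (W.comul a ⊗ₜ[k] W.comul b)
  simp only [comp_apply, LinearEquiv.coe_coe, map_tmul, id_coe, id_eq] at e2
  have e4 := LinearMap.congr_fun h4
    (W.comul a ⊗ₜ[k] lTensor H W.comul (W.comul b))
  simp only [comp_apply, LinearEquiv.coe_coe, lTensor_tmul] at e4
  have e6 := LinearMap.congr_fun h6 (W.comul a ⊗ₜ[k] W.comul b)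
  simp only [comp_apply, LinearEquiv.coe_coe, lTensor_tmul] at e6
  have hcomp : lTensor H (pim W) (lTensor H W.comul (W.comul b))
      = lTensor H (eT W) (W.comul b) := by
    rw [← comp_apply, ← lTensor_comp, pim_comul]
  rw [h2, comp_apply, e2, hb3, e4, hcomp, e6, final]
  rw [antipode_eT, antipode_eS]

/-- THE KEY FACT: the antipode of a weak Hopf algebra is anti-multiplicative. -/
lemma antipode_mul (a b : H) :
    W.antipode (a * b) = W.antipode b * W.antipode a := by
  rw [← chain1 W a b, chain2 W a b]

section Integral
variable (L : H)

/-- `Δ(y) Δ(Λ) = (ε_t(y) ⊗ 1) Δ(Λ)` for a left integral `Λ`. -/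
lemma KA (hL : ∀ h : H, h * L = epsT W.toWeakBialgebraData h * L) (y : H) :
    W.comul y * W.comul L = (eT W y ⊗ₜ[k] (1:H)) * W.comul L := by
  rw [← W.comul_mul, hL y, ← eT_apply, W.comul_mul, D1, mul_assoc, comul_one_mul]

/-- Step A : `(1 ⊗ x) Δ(Λ) = (S(x) ⊗ 1) Δ(Λ)`. -/
lemma stepA (hL : ∀ h : H, h * L = epsT W.toWeakBialgebraData h * L) (x : H) :
    ((1:H) ⊗ₜ[k] x) * W.comul L = (W.antipode x ⊗ₜ[k] (1:H)) * W.comul L := by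
  have SA1 : ∀ u v : H,
      ((W.antipode u * eT W v) ⊗ₜ[k] (1:H)) * W.comul L
        = ((W.antipode u ⊗ₜ[k] (1:H)) * W.comul v) * W.comul L := by
    intro u v
    rw [mul_assoc, KA W L hL v, ← mul_assoc, Algebra.TensorProduct.tmul_mul_tmul,
      one_mul]

  set Phi := W.comul L with hPhi
  set i1 : H →ₗ[k] H ⊗[k] H := (TensorProduct.mk k H H).flip (1:H) with hi1
  have hi1app : ∀ u : H, i1 u = u ⊗ₜ[k] (1:H) := fun u => rfl
  set ps1 : H ⊗[k] H →ₗ[k] H ⊗[k] H :=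
    mulRight k Phi ∘ₗ i1 ∘ₗ mul' k H ∘ₗ map W.antipode (eT W) with hps1
  set ps2 : H ⊗[k] H →ₗ[k] H ⊗[k] H :=
    mulRight k Phi ∘ₗ LinearMap.mul' k (H ⊗[k] H)
      ∘ₗ map (i1 ∘ₗ W.antipode) W.comul with hps2
  have hps : ps1 = ps2 := by
    apply TensorProduct.ext'
    intro u v
    simp only [hps1, hps2, comp_apply, map_tmul, mul'_apply, mulRight_apply, hi1app]
    rw [SA1 u v, mul_assoc]
  set ps3 : H ⊗[k] (H ⊗[k] H) →ₗ[k] H ⊗[k] H :=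
    mulRight k Phi ∘ₗ LinearMap.mul' k (H ⊗[k] H)
      ∘ₗ rTensor (H ⊗[k] H) (i1 ∘ₗ W.antipode) with hps3
  have h23 : ps2 = ps3 ∘ₗ lTensor H W.comul := by
    apply TensorProduct.ext'
    intro u v
    simp [hps2, hps3]
  set ps4 : (H ⊗[k] H) ⊗[k] H →ₗ[k] H ⊗[k] H :=
    mulRight k Phi ∘ₗ rTensor H (mul' k H ∘ₗ map W.antipode LinearMap.id) with hps4
  have h34 : ps3 ∘ₗ (TensorProduct.assoc k H H H).toLinearMap = ps4 := by
    ext u v w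
    simp [hps3, hps4, hi1app, Algebra.TensorProduct.tmul_mul_tmul]
  have e1 : (W.antipode x ⊗ₜ[k] (1:H)) * Phi = ps1 (W.comul x) := by
    simp only [hps1, comp_apply, mulRight_apply, hi1app]
    rw [antipode_eT]
  have e2 : ps3 (lTensor H W.comul (W.comul x))
      = ps4 (rTensor H W.comul (W.comul x)) := by
    rw [← W.coassoc x, ← h34]
    simp only [comp_apply, LinearEquiv.coe_coe]
  have e3 : ps4 (rTensor H W.comul (W.comul x)) = (rTensor H (eS W) (W.comul x)) * Phi := by
    simp only [hps4, comp_apply, mulRight_apply]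
    rw [← comp_apply (rTensor H (mul' k H ∘ₗ map W.antipode LinearMap.id)),
      ← rTensor_comp]
    rfl
  rw [e1, hps, h23, comp_apply, e2, e3, lemC, mul_assoc, comul_one_mul]

/-- `P-C` : Casimir property for elements in the image of `S`. -/
lemma PC (hL : ∀ h : H, h * L = epsT W.toWeakBialgebraData h * L) (x : H) :
    (W.antipode x ⊗ₜ[k] (1:H)) * lTensor H W.antipode (W.comul L)
      = lTensor H W.antipode (W.comul L) * ((1:H) ⊗ₜ[k] W.antipode x) := by
  have M2 : ∀ t : H ⊗[k] H,
      lTensor H W.antipode (((1:H) ⊗ₜ[k] x) * t)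
        = lTensor H W.antipode t * ((1:H) ⊗ₜ[k] W.antipode x) := by
    intro t
    induction t using TensorProduct.induction_on with
    | zero => simp
    | tmul u v =>
      simp [Algebra.TensorProduct.tmul_mul_tmul, antipode_mul]
    | add s t hs ht => simp only [mul_add, add_mul, map_add, hs, ht]
  rw [← lTensorS_mul_left, ← stepA W L hL x, M2]

end Integral
/-- `Φ = (id ⊗ S)(Δ Λ)`. -/
noncomputable def PhiL (W : WeakHopfData k H) (L : H) : H ⊗[k] H :=
  lTensor H W.antipode (W.comul L)

variable (L : H)

lemma R1L (hL : ∀ h : H, h * L = epsT W.toWeakBialgebraData h * L) (u : H) :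
    PhiL W L * ((1:H) ⊗ₜ[k] eT W u) = (eT W u ⊗ₜ[k] (1:H)) * PhiL W L := by
  rw [← S_kap W u, PhiL, PC W L hL (kap W u)]

lemma R2L (hL : ∀ h : H, h * L = epsT W.toWeakBialgebraData h * L) (v : H) :
    (eS W v ⊗ₜ[k] (1:H)) * PhiL W L = PhiL W L * ((1:H) ⊗ₜ[k] eS W v) := by
  rw [← S_rho W v, PhiL, PC W L hL (rho W v)]

/-- `Ξ(u ⊗ v) = (ε_t(u) ⊗ 1) Φ (1 ⊗ v)`. -/
noncomputable def XiL (W : WeakHopfData k H) (L : H) : H ⊗[k] H →ₗ[k] H ⊗[k] H :=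
  LinearMap.mul' k (H ⊗[k] H)
    ∘ₗ map (mulRight k (PhiL W L) ∘ₗ (TensorProduct.mk k H H).flip (1:H) ∘ₗ eT W)
        (TensorProduct.mk k H H (1:H))

/-- `Ξ'(u ⊗ v) = (u ⊗ 1) Φ (1 ⊗ ε_s(v))`. -/
noncomputable def XiL' (W : WeakHopfData k H) (L : H) : H ⊗[k] H →ₗ[k] H ⊗[k] H :=
  LinearMap.mul' k (H ⊗[k] H)
    ∘ₗ map ((TensorProduct.mk k H H).flip (1:H))
        (mulLeft k (PhiL W L) ∘ₗ TensorProduct.mk k H H (1:H) ∘ₗ eS W)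

lemma XiL_tmul (u v : H) :
    XiL W L (u ⊗ₜ[k] v)
      = ((eT W u ⊗ₜ[k] (1:H)) * PhiL W L) * ((1:H) ⊗ₜ[k] v) := by
  simp [XiL]

lemma XiL'_tmul (u v : H) :
    XiL' W L (u ⊗ₜ[k] v)
      = (u ⊗ₜ[k] (1:H)) * (PhiL W L * ((1:H) ⊗ₜ[k] eS W v)) := by
  simp [XiL']

lemma Q1L (hL : ∀ h : H, h * L = epsT W.toWeakBialgebraData h * L) (h : H) :
    PhiL W L * ((1:H) ⊗ₜ[k] h) = XiL W L (W.comul h) := by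
  have q1aux : ∀ t : H ⊗[k] H,
      PhiL W L * ((1:H) ⊗ₜ[k] (mul' k H (rTensor H (eT W) t))) = XiL W L t := by
    intro t
    induction t using TensorProduct.induction_on with
    | zero => simp
    | tmul u v =>
      rw [rTensor_tmul, mul'_apply, XiL_tmul]
      rw [show (1:H) ⊗ₜ[k] (eT W u * v)
          = ((1:H) ⊗ₜ[k] eT W u) * ((1:H) ⊗ₜ[k] v) by
        rw [Algebra.TensorProduct.tmul_mul_tmul, one_mul]]
      rw [← mul_assoc, R1L W L hL u]
    | add s t hs ht =>
      simp only [map_add, tmul_add, mul_add, hs, ht]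
  have := q1aux (W.comul h)
  rwa [sum_eT_mul] at this

lemma Q2L (hL : ∀ h : H, h * L = epsT W.toWeakBialgebraData h * L) (h : H) :
    (h ⊗ₜ[k] (1:H)) * PhiL W L = XiL' W L (W.comul h) := by
  have q2aux : ∀ t : H ⊗[k] H,
      ((mul' k H (lTensor H (eS W) t)) ⊗ₜ[k] (1:H)) * PhiL W L = XiL' W L t := by
    intro t
    induction t using TensorProduct.induction_on with
    | zero => simp
    | tmul u v =>
      rw [lTensor_tmul, mul'_apply, XiL'_tmul]
      rw [show (u * eS W v) ⊗ₜ[k] (1:H)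
          = (u ⊗ₜ[k] (1:H)) * (eS W v ⊗ₜ[k] (1:H)) by
        rw [Algebra.TensorProduct.tmul_mul_tmul, one_mul]]
      rw [mul_assoc, R2L W L hL v]
    | add s t hs ht =>
      simp only [map_add, add_tmul, add_mul, hs, ht]
  have := q2aux (W.comul h)
  rwa [sum_mul_eS] at this

/-- `N₂((u⊗v)⊗w) = (u S(v) ⊗ 1) Φ (1 ⊗ w)`. -/
noncomputable def N2L (W : WeakHopfData k H) (L : H) : (H ⊗[k] H) ⊗[k] H →ₗ[k] H ⊗[k] H :=
  LinearMap.mul' k (H ⊗[k] H)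
    ∘ₗ map (mulRight k (PhiL W L) ∘ₗ (TensorProduct.mk k H H).flip (1:H) ∘ₗ pim W)
        (TensorProduct.mk k H H (1:H))

/-- `N₁(u⊗(v⊗w)) = (u ⊗ 1) Φ (1 ⊗ S(v) w)`. -/
noncomputable def N1L (W : WeakHopfData k H) (L : H) : H ⊗[k] (H ⊗[k] H) →ₗ[k] H ⊗[k] H :=
  LinearMap.mul' k (H ⊗[k] H)
    ∘ₗ map ((TensorProduct.mk k H H).flip (1:H))
        (mulLeft k (PhiL W L) ∘ₗ TensorProduct.mk k H H (1:H)
          ∘ₗ mul' k H ∘ₗ rTensor H W.antipode)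

lemma XiN2 : XiL W L = N2L W L ∘ₗ rTensor H W.comul := by
  apply TensorProduct.ext'
  intro u v
  simp only [XiL, N2L, comp_apply, map_tmul, rTensor_tmul]
  rfl

lemma XiN1 : XiL' W L = N1L W L ∘ₗ lTensor H W.comul := by
  apply TensorProduct.ext'
  intro u v
  simp only [XiL', N1L, comp_apply, map_tmul, lTensor_tmul]
  rfl

lemma NN (hL : ∀ h : H, h * L = epsT W.toWeakBialgebraData h * L) :
    N1L W L ∘ₗ (TensorProduct.assoc k H H H).toLinearMap = N2L W L := by
  ext u v w
  simp only [AlgebraTensorModule.curry_apply, TensorProduct.curry_apply,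
    LinearMap.coe_restrictScalars, comp_apply, LinearEquiv.coe_coe, assoc_tmul,
    N1L, N2L, map_tmul, mul'_apply, mulLeft_apply, mulRight_apply, rTensor_tmul,
    pim, lTensor_tmul, TensorProduct.mk_apply, flip_apply]
  rw [show (1:H) ⊗ₜ[k] (W.antipode v * w)
      = ((1:H) ⊗ₜ[k] W.antipode v) * ((1:H) ⊗ₜ[k] w) by
    rw [Algebra.TensorProduct.tmul_mul_tmul, one_mul]]
  calc (u ⊗ₜ[k] (1:H)) * (PhiL W L * (((1:H) ⊗ₜ[k] W.antipode v) * ((1:H) ⊗ₜ[k] w)))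
      = (u ⊗ₜ[k] (1:H)) * ((PhiL W L * ((1:H) ⊗ₜ[k] W.antipode v)) * ((1:H) ⊗ₜ[k] w)) := by
        rw [mul_assoc]
    _ = (u ⊗ₜ[k] (1:H)) * (((W.antipode v ⊗ₜ[k] (1:H)) * PhiL W L) * ((1:H) ⊗ₜ[k] w)) := by
        rw [PhiL, PC W L hL v]
    _ = ((u * W.antipode v) ⊗ₜ[k] (1:H)) * PhiL W L * ((1:H) ⊗ₜ[k] w) := by
        rw [← mul_assoc, ← mul_assoc, Algebra.TensorProduct.tmul_mul_tmul, one_mul]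

/-- the main casimir theorem, internal version. -/
lemma casimir (hL : ∀ h : H, h * L = epsT W.toWeakBialgebraData h * L) (h : H) :
    (TensorProduct.map LinearMap.id (LinearMap.mulRight k h ∘ₗ W.antipode)) (W.comul L)
      = (TensorProduct.map (LinearMap.mulLeft k h) W.antipode) (W.comul L) := by
  have L1 : ∀ t : H ⊗[k] H,
      map LinearMap.id (mulRight k h ∘ₗ W.antipode) t
        = lTensor H W.antipode t * ((1:H) ⊗ₜ[k] h) := by
    intro t
    induction t using TensorProduct.induction_on with
    | zero => simp
    | tmul u v => simp [Algebra.TensorProduct.tmul_mul_tmul]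
    | add s t hs ht => simp only [map_add, add_mul, hs, ht]
  have L2 : ∀ t : H ⊗[k] H,
      map (mulLeft k h) W.antipode t = (h ⊗ₜ[k] (1:H)) * lTensor H W.antipode t := by
    intro t
    induction t using TensorProduct.induction_on with
    | zero => simp
    | tmul u v => simp [Algebra.TensorProduct.tmul_mul_tmul]
    | add s t hs ht => simp only [map_add, mul_add, hs, ht]
  have I4 : XiL W L (W.comul h) = XiL' W L (W.comul h) := by
    rw [XiN2, XiN1, comp_apply, comp_apply, ← NN W L hL]
    simp only [comp_apply, LinearEquiv.coe_coe]
    rw [W.coassoc h]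
  rw [L1, L2]
  rw [show lTensor H W.antipode (W.comul L) = PhiL W L from rfl]
  rw [Q1L W L hL h, I4, ← Q2L W L hL h]

end WH


/-- Let `H` be a finite-dimensional weak Hopf algebra and `Λ` a left
integral (`hΛ = ε_t(h)Λ` for all `h`).  Then `Λ₁ ⊗ S(Λ₂)h = hΛ₁ ⊗ S(Λ₂)` in `H ⊗ H` for all
`h ∈ H`; that is, applying `S` to the second leg of `Δ(Λ)` yields a Casimir element. -/
theorem weak_hopf_integral_casimir
    (k H : Type*) [Field k] [Ring H] [Algebra k H] [FiniteDimensional k H]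
    (W : WeakHopfData k H) (Λ : H)
    (hΛ : ∀ h : H, h * Λ = epsT W.toWeakBialgebraData h * Λ) :
    ∀ h : H,
      (TensorProduct.map LinearMap.id (LinearMap.mulRight k h ∘ₗ W.antipode))
          (W.comul Λ)
        = (TensorProduct.map (LinearMap.mulLeft k h) W.antipode) (W.comul Λ) := by
  intro h
  exact casimir W Λ hΛ h
end
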